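/- arXiv:2107.09876 — 9 statements merged into one kernel-verified Lean document; each statement's English description precedes it below -/
import Mathlib

section
/- For every real α ∈ [0,1), integer d ≥ 1, and integer q ≥ 2, B^SRW > B^sphere, where B^SRW := d + 2(δ·q^(-δ) + δ'·q^(1-δ'))/(q+1) + 2(q^(1-δ) - q^(1-δ'))/(q+1)², and B^sphere := d + (-4q + 2(δ'(q-1)+1)q^(1-δ') + 2(δ(q-1)+q)q^(-δ))/(q²-1). Indeed, B^SRW - B^sphere = (4q/((q+1)²(q-1)))·(q+1-q^(1-δ')-q^(-δ)) ≥ 4q/(q+1)² > 0. -/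
theorem stmt_2 (α : ℝ) (hα0 : 0 ≤ α) (hα1 : α < 1) (d q : ℕ) (hd : 1 ≤ d) (hq : 2 ≤ q) :
    let δ : ℤ := ((d / 2 : ℕ) : ℤ)
    let δ' : ℤ := (((d + 1) / 2 : ℕ) : ℤ)
    let BSRW : ℝ := (d : ℝ)
        + 2 * ((δ : ℝ) * (q : ℝ) ^ (-δ) + (δ' : ℝ) * (q : ℝ) ^ (1 - δ')) / ((q : ℝ) + 1)
        + 2 * ((q : ℝ) ^ (1 - δ) - (q : ℝ) ^ (1 - δ')) / ((q : ℝ) + 1) ^ 2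
    let Bsphere : ℝ := (d : ℝ)
        + (-4 * (q : ℝ) + 2 * ((δ' : ℝ) * ((q : ℝ) - 1) + 1) * (q : ℝ) ^ (1 - δ')
            + 2 * ((δ : ℝ) * ((q : ℝ) - 1) + (q : ℝ)) * (q : ℝ) ^ (-δ)) / ((q : ℝ) ^ 2 - 1)
    BSRW - Bsphere = (4 * (q : ℝ) / (((q : ℝ) + 1) ^ 2 * ((q : ℝ) - 1))) *
        ((q : ℝ) + 1 - (q : ℝ) ^ (1 - δ') - (q : ℝ) ^ (-δ)) ∧
    4 * (q : ℝ) / ((q : ℝ) + 1) ^ 2 ≤ BSRW - Bsphere ∧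
    0 < 4 * (q : ℝ) / ((q : ℝ) + 1) ^ 2 ∧
    Bsphere < BSRW := by
  intro δ δ' BSRW Bsphere
  have hq2 : (2 : ℝ) ≤ (q : ℝ) := by exact_mod_cast hq
  have hq0 : (q : ℝ) ≠ 0 := by linarith
  have hq1 : (1 : ℝ) ≤ (q : ℝ) := by linarith
  have hδ : (0 : ℤ) ≤ δ := Int.ofNat_nonneg _
  have hδ' : (1 : ℤ) ≤ δ' := by
    show (1 : ℤ) ≤ (((d + 1) / 2 : ℕ) : ℤ)
    have : 1 ≤ (d + 1) / 2 := by omega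
    exact_mod_cast this
  set X : ℝ := (q : ℝ) ^ (-δ) with hX
  set Y : ℝ := (q : ℝ) ^ (1 - δ') with hY
  have hXq : (q : ℝ) ^ (1 - δ) = (q : ℝ) * X := by
    have h : (1 : ℤ) - δ = 1 + -δ := by ring
    rw [hX, h, zpow_add₀ hq0, zpow_one]
  have hX1 : X ≤ 1 := zpow_le_one_of_nonpos₀ hq1 (by omega)
  have hY1 : Y ≤ 1 := zpow_le_one_of_nonpos₀ hq1 (by omega)
  have hX0 : 0 < X := zpow_pos (by linarith) _
  have hY0 : 0 < Y := zpow_pos (by linarith) _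
  have hp1 : (q : ℝ) + 1 ≠ 0 := by linarith
  have hm1 : (q : ℝ) - 1 ≠ 0 := by linarith
  have hsq : (q : ℝ) ^ 2 - 1 ≠ 0 := by
    have : (q : ℝ) ^ 2 - 1 = ((q : ℝ) + 1) * ((q : ℝ) - 1) := by ring
    rw [this]; exact mul_ne_zero hp1 hm1
  have hid : BSRW - Bsphere = (4 * (q : ℝ) / (((q : ℝ) + 1) ^ 2 * ((q : ℝ) - 1))) *
      ((q : ℝ) + 1 - Y - X) := by
    simp only [BSRW, Bsphere, hXq, ← hX, ← hY]
    field_simp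
    ring
  have hkey : 4 * (q : ℝ) / ((q : ℝ) + 1) ^ 2 ≤ BSRW - Bsphere := by
    rw [hid]
    have h1 : 4 * (q : ℝ) / ((q : ℝ) + 1) ^ 2
        = (4 * (q : ℝ) / (((q : ℝ) + 1) ^ 2 * ((q : ℝ) - 1))) * ((q : ℝ) - 1) := by
      field_simp
    rw [h1]
    apply mul_le_mul_of_nonneg_left (by linarith)
    have hden : 0 < ((q : ℝ) + 1) ^ 2 * ((q : ℝ) - 1) :=
      mul_pos (by positivity) (by linarith)
    positivity
  have hpos : 0 < 4 * (q : ℝ) / ((q : ℝ) + 1) ^ 2 := by positivity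
  exact ⟨hid, hkey, hpos, sub_pos.mp (lt_of_lt_of_le hpos hkey)⟩
end

section
/- For every integer d ≥ 1 and integer q ≥ 2, B^ball_{d,q} ≥ 1/3, with equality if and only if (d,q) = (1,2). -/
private lemma helper_third (c x D : ℝ) (hD : 0 < D) (h : (1/3 - c) * D < x) :
    1/3 < c + x / D := by
  have := (lt_div_iff₀ hD).mpr h
  linarith

theorem stmt_4 (d q : ℕ) (hd : 1 ≤ d) (hq : 2 ≤ q) :
    let δ : ℤ := ((d / 2 : ℕ) : ℤ)
    let δ' : ℤ := (((d + 1) / 2 : ℕ) : ℤ)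
    let Bball : ℝ := (d : ℝ)
        + (-6 * (q : ℝ) - 2 + 2 * ((δ' : ℝ) * ((q : ℝ) - 1) + 2) * (q : ℝ) ^ (1 - δ')
            + 2 * ((δ : ℝ) * ((q : ℝ) - 1) + (q : ℝ) + 1) * (q : ℝ) ^ (-δ)) / ((q : ℝ) ^ 2 - 1)
    (1 / 3 : ℝ) ≤ Bball ∧ (Bball = 1 / 3 ↔ d = 1 ∧ q = 2) := by
  intro δ δ' Bball
  have hQ2 : (2:ℝ) ≤ (q:ℝ) := by exact_mod_cast hq
  have hQ0 : (0:ℝ) < (q:ℝ) := by linarith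
  have hQne : (q:ℝ) ≠ 0 := ne_of_gt hQ0
  have hD : (0:ℝ) < (q:ℝ)^2 - 1 := by nlinarith
  have hinv : (q:ℝ) * (q:ℝ)⁻¹ = 1 := mul_inv_cancel₀ hQne
  have heq : d = 1 → q = 2 → Bball = 1/3 := by
    intro h1 h2
    subst h1; subst h2
    simp only [Bball, δ, δ']
    norm_num
  have hstrict : ¬(d = 1 ∧ q = 2) → 1/3 < Bball := by
    intro hne
    have hcase : d = 1 ∨ d = 2 ∨ d = 3 ∨ d = 4 ∨ 5 ≤ d := by omega
    rcases hcase with h | h | h | h | hd5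
    · -- d = 1
      subst h
      have hq3 : 3 ≤ q := by
        rcases Nat.lt_or_ge q 3 with h | h
        · exact absurd ⟨rfl, by omega⟩ hne
        · exact h
      have hQ3 : (3:ℝ) ≤ (q:ℝ) := by exact_mod_cast hq3
      simp only [Bball, δ, δ']
      norm_num
      apply helper_third _ _ _ hD
      nlinarith
    · subst h
      simp only [Bball, δ, δ']
      norm_num
      apply helper_third _ _ _ hD
      nlinarith
    · subst h
      simp only [Bball, δ, δ']
      norm_num
      apply helper_third _ _ _ hD
      nlinarith
    · subst h
      simp only [Bball, δ, δ']
      norm_num [zpow_ofNat]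
      apply helper_third _ _ _ hD
      have hpos : (0:ℝ) < 2 * (2 * ((q:ℝ) - 1) + (q:ℝ) + 1) * ((q:ℝ)^2)⁻¹ := by
        apply mul_pos (by nlinarith)
        exact inv_pos.mpr (by positivity)
      have hterm : 2 * (2 * ((q:ℝ) - 1) + 2) * (q:ℝ)⁻¹ = 4 := by
        field_simp; ring
      rw [hterm]
      clear heq hne
      clear Bball
      clear δ' δ
      nlinarith [hpos, sq_nonneg ((q:ℝ) - 2)]
    · -- d ≥ 5
      have hδ0 : (0:ℝ) ≤ (δ:ℝ) := by positivity
      have hδ'0 : (0:ℝ) ≤ (δ':ℝ) := by positivity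
      have hx1 : (0:ℝ) < (δ':ℝ) * ((q:ℝ) - 1) + 2 := by nlinarith
      have hx2 : (0:ℝ) < (δ:ℝ) * ((q:ℝ) - 1) + (q:ℝ) + 1 := by nlinarith
      have h1 : (0:ℝ) < 2 * ((δ':ℝ) * ((q:ℝ) - 1) + 2) * (q:ℝ) ^ (1 - δ') :=
        mul_pos (by linarith) (zpow_pos hQ0 _)
      have h2 : (0:ℝ) < 2 * ((δ:ℝ) * ((q:ℝ) - 1) + (q:ℝ) + 1) * (q:ℝ) ^ (-δ) :=
        mul_pos (by linarith) (zpow_pos hQ0 _)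
      have hdiv : (-6 * (q:ℝ) - 2) / ((q:ℝ)^2 - 1) < (-6 * (q : ℝ) - 2 + 2 * ((δ' : ℝ) * ((q : ℝ) - 1) + 2) * (q : ℝ) ^ (1 - δ')
            + 2 * ((δ : ℝ) * ((q : ℝ) - 1) + (q : ℝ) + 1) * (q : ℝ) ^ (-δ)) / ((q:ℝ)^2 - 1) := by
        gcongr
        linarith
      have hbound : -(14/3 : ℝ) ≤ (-6 * (q:ℝ) - 2) / ((q:ℝ)^2 - 1) := by
        rw [le_div_iff₀ hD]; nlinarith
      have hd5r : (5:ℝ) ≤ (d:ℝ) := by exact_mod_cast hd5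
      simp only [Bball]
      linarith
  constructor
  · by_cases h : d = 1 ∧ q = 2
    · rw [heq h.1 h.2]
    · exact le_of_lt (hstrict h)
  · constructor
    · intro he
      by_contra h
      exact absurd he (ne_of_gt (hstrict h))
    · intro ⟨h1, h2⟩; exact heq h1 h2
end

section
/- The infimum of B^SRW_{α,d,q} over all real α ∈ [0,1), integers d ≥ 1 and q ≥ 2 equals 1, and the infimum is not attained. -/
/-- The coefficient `B^SRW_{α,d,q}` (which does not depend on `α`). -/
noncomputable def BSRW (d q : ℕ) : ℝ :=
  (d : ℝ)
    + 2 * (((d / 2 : ℕ) : ℝ) * (q : ℝ) ^ (-((d / 2 : ℕ) : ℤ))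
        + (((d + 1) / 2 : ℕ) : ℝ) * (q : ℝ) ^ ((1 : ℤ) - (((d + 1) / 2 : ℕ) : ℤ))) / ((q : ℝ) + 1)
    + 2 * ((q : ℝ) ^ ((1 : ℤ) - ((d / 2 : ℕ) : ℤ))
        - (q : ℝ) ^ ((1 : ℤ) - (((d + 1) / 2 : ℕ) : ℤ))) / ((q : ℝ) + 1) ^ 2

lemma bsrw_gt_one (d q : ℕ) (hd : 1 ≤ d) (hq : 2 ≤ q) : 1 < BSRW d q := by
  have hq1 : (1 : ℝ) ≤ (q : ℝ) := by exact_mod_cast Nat.one_le_of_lt hq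
  have hq0 : (0 : ℝ) < (q : ℝ) := lt_of_lt_of_le one_pos hq1
  have hden : (0 : ℝ) < (q : ℝ) + 1 := by linarith
  have hd1 : (1 : ℝ) ≤ (d : ℝ) := by exact_mod_cast hd
  have hδ' : (1 : ℝ) ≤ (((d + 1) / 2 : ℕ) : ℝ) := by
    have : 1 ≤ (d + 1) / 2 := Nat.one_le_div_iff (by norm_num) |>.mpr (by omega)
    exact_mod_cast this
  have hA : (0 : ℝ) ≤ ((d / 2 : ℕ) : ℝ) * (q : ℝ) ^ (-((d / 2 : ℕ) : ℤ)) := by positivity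
  have hB : (0 : ℝ) < (((d + 1) / 2 : ℕ) : ℝ) * (q : ℝ) ^ ((1 : ℤ) - (((d + 1) / 2 : ℕ) : ℤ)) := by
    have := zpow_pos hq0 ((1 : ℤ) - (((d + 1) / 2 : ℕ) : ℤ))
    nlinarith
  have hC : (q : ℝ) ^ ((1 : ℤ) - (((d + 1) / 2 : ℕ) : ℤ)) ≤
      (q : ℝ) ^ ((1 : ℤ) - ((d / 2 : ℕ) : ℤ)) := by
    apply zpow_le_zpow_right₀ hq1
    have : d / 2 ≤ (d + 1) / 2 := Nat.div_le_div_right (by omega)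
    have : ((d / 2 : ℕ) : ℤ) ≤ (((d + 1) / 2 : ℕ) : ℤ) := by exact_mod_cast this
    omega
  have h2 : 0 < 2 * (((d / 2 : ℕ) : ℝ) * (q : ℝ) ^ (-((d / 2 : ℕ) : ℤ))
        + (((d + 1) / 2 : ℕ) : ℝ) * (q : ℝ) ^ ((1 : ℤ) - (((d + 1) / 2 : ℕ) : ℤ))) / ((q : ℝ) + 1) := by
    apply div_pos _ hden
    nlinarith
  have h3 : 0 ≤ 2 * ((q : ℝ) ^ ((1 : ℤ) - ((d / 2 : ℕ) : ℤ))
        - (q : ℝ) ^ ((1 : ℤ) - (((d + 1) / 2 : ℕ) : ℤ))) / ((q : ℝ) + 1) ^ 2 := by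
    apply div_nonneg _ (by positivity)
    nlinarith
  unfold BSRW
  linarith

lemma bsrw_one_le (q : ℕ) (hq : 2 ≤ q) : BSRW 1 q ≤ 1 + 4 / ((q : ℝ) + 1) := by
  have hq2 : (2 : ℝ) ≤ (q : ℝ) := by exact_mod_cast hq
  have hden : (0 : ℝ) < (q : ℝ) + 1 := by linarith
  unfold BSRW
  norm_num
  have h1 : 2 * ((q : ℝ) - 1) / ((q : ℝ) + 1) ^ 2 ≤ 2 / ((q : ℝ) + 1) := by
    rw [div_le_div_iff₀ (by positivity) (by positivity)]
    nlinarith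
  have h2 : 4 / ((q : ℝ) + 1) = 2 / ((q : ℝ) + 1) + 2 / ((q : ℝ) + 1) := by ring
  linarith

theorem stmt_6 :
    IsGLB {x : ℝ | ∃ (α : ℝ) (d q : ℕ), 0 ≤ α ∧ α < 1 ∧ 1 ≤ d ∧ 2 ≤ q ∧ x = BSRW d q} 1 ∧
    (1 : ℝ) ∉ {x : ℝ | ∃ (α : ℝ) (d q : ℕ), 0 ≤ α ∧ α < 1 ∧ 1 ≤ d ∧ 2 ≤ q ∧ x = BSRW d q} := by
  constructor
  · constructor
    · rintro x ⟨α, d, q, _, _, hd, hq, rfl⟩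
      exact (bsrw_gt_one d q hd hq).le
    · intro b hb
      by_contra h
      push_neg at h
      obtain ⟨q, hqb⟩ := exists_nat_gt (4 / (b - 1) + 2)
      have hb1 : 0 < b - 1 := by linarith
      have hpos : 0 < 4 / (b - 1) := by positivity
      have hq2 : 2 ≤ q := by
        by_contra hq2
        push_neg at hq2
        interval_cases q <;> norm_num at hqb <;> linarith
      have hmem : BSRW 1 q ∈ {x : ℝ | ∃ (α : ℝ) (d q : ℕ),
          0 ≤ α ∧ α < 1 ∧ 1 ≤ d ∧ 2 ≤ q ∧ x = BSRW d q} :=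
        ⟨0, 1, q, le_refl 0, one_pos, le_refl 1, hq2, rfl⟩
      have hle := hb hmem
      have hle2 := bsrw_one_le q hq2
      have hden : (0 : ℝ) < (q : ℝ) + 1 := by positivity
      have : 4 / ((q : ℝ) + 1) < b - 1 := by
        rw [div_lt_iff₀ hden]
        have : 4 / (b - 1) < (q : ℝ) + 1 := by linarith
        rw [div_lt_iff₀ hb1] at this
        nlinarith
      linarith
  · rintro ⟨α, d, q, _, _, hd, hq, h⟩
    have := bsrw_gt_one d q hd hq
    linarith [h ▸ this]
end

section
/- Let G = (V,E) be a locally finite tree, ρ a zero-sum assignment, and ψ the unique flow with div ψ = ρ. If Φ₁ and Φ₂ are two good potential functions with respect to ψ, then ∑_{v∈V} Φ₁(v)ρ(v) = ∑_{v∈V} Φ₂(v)ρ(v). -/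
theorem stmt_8 {V : Type*} (G : SimpleGraph V) (hlf : G.LocallyFinite)
    (hconn : G.Connected) (hacyc : G.IsAcyclic)
    (ρ : V → ℝ) (hρfin : (Function.support ρ).Finite) (hρsum : ∑ᶠ v, ρ v = 0)
    (ψ : V → V → ℝ)
    (hskew : ∀ v w, ψ v w = -ψ w v) (hedge : ∀ v w, ¬G.Adj v w → ψ v w = 0)
    (hfin : (Function.support fun p : V × V => ψ p.1 p.2).Finite)
    (hdiv : ∀ v, ∑ᶠ w, ψ v w = ρ v)
    (Φ₁ Φ₂ : V → ℝ)
    (hΦ₁ : ∀ x y, G.Adj x y →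
      (0 < ψ x y → Φ₁ x - Φ₁ y = 1) ∧ (ψ x y < 0 → Φ₁ x - Φ₁ y = -1) ∧
      (ψ x y = 0 → |Φ₁ x - Φ₁ y| ≤ 1))
    (hΦ₂ : ∀ x y, G.Adj x y →
      (0 < ψ x y → Φ₂ x - Φ₂ y = 1) ∧ (ψ x y < 0 → Φ₂ x - Φ₂ y = -1) ∧
      (ψ x y = 0 → |Φ₂ x - Φ₂ y| ≤ 1)) :
    ∑ᶠ v, Φ₁ v * ρ v = ∑ᶠ v, Φ₂ v * ρ v := by
  -- finiteness of fiberwise supports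
  have hfib : ∀ v, (Function.support fun w => ψ v w).Finite := by
    intro v
    refine (hfin.image Prod.snd).subset ?_
    intro w hw
    exact ⟨(v, w), hw, rfl⟩
  -- support facts
  have hs1 : ∀ Φ : V → ℝ,
      (Function.support fun p : V × V => Φ p.1 * ψ p.1 p.2).Finite := by
    intro Φ
    refine hfin.subset ?_
    intro p hp
    simp only [Function.mem_support] at hp ⊢
    exact fun h => hp (by rw [h, mul_zero])
  have hs2 : ∀ Φ : V → ℝ,
      (Function.support fun p : V × V => Φ p.2 * ψ p.1 p.2).Finite := by
    intro Φ
    refine hfin.subset ?_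
    intro p hp
    simp only [Function.mem_support] at hp ⊢
    exact fun h => hp (by rw [h, mul_zero])
  -- step A: ∑ᶠ v, Φ v * ρ v = ∑ᶠ p, Φ p.1 * ψ p.1 p.2
  have stepA : ∀ Φ : V → ℝ,
      ∑ᶠ v, Φ v * ρ v = ∑ᶠ p : V × V, Φ p.1 * ψ p.1 p.2 := by
    intro Φ
    rw [finsum_curry _ (hs1 Φ)]
    refine finsum_congr fun v => ?_
    rw [← hdiv v, mul_finsum _ _]
  -- step B: ∑ᶠ p, Φ p.2 * ψ p.1 p.2 = - ∑ᶠ p, Φ p.1 * ψ p.1 p.2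
  have stepB : ∀ Φ : V → ℝ,
      (∑ᶠ p : V × V, Φ p.2 * ψ p.1 p.2) = -∑ᶠ p : V × V, Φ p.1 * ψ p.1 p.2 := by
    intro Φ
    have := finsum_comp_equiv (Equiv.prodComm V V)
      (f := fun p : V × V => Φ p.2 * ψ p.1 p.2)
    rw [← this]
    have : ∀ p : V × V,
        Φ ((Equiv.prodComm V V) p).2 * ψ ((Equiv.prodComm V V) p).1
          ((Equiv.prodComm V V) p).2 = -(Φ p.1 * ψ p.1 p.2) := by
      intro p
      simp only [Equiv.prodComm_apply, Prod.fst_swap, Prod.snd_swap]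
      rw [hskew p.2 p.1]
      ring
    rw [finsum_congr this, finsum_neg_distrib]
  -- step C: for any Φ, ∑ᶠ p, (Φ p.1 - Φ p.2) * ψ p.1 p.2 = 2 * ∑ᶠ v, Φ v * ρ v
  have stepC : ∀ Φ : V → ℝ,
      (∑ᶠ p : V × V, (Φ p.1 - Φ p.2) * ψ p.1 p.2) = 2 * ∑ᶠ v, Φ v * ρ v := by
    intro Φ
    have hsplit : ∀ p : V × V, (Φ p.1 - Φ p.2) * ψ p.1 p.2 =
        Φ p.1 * ψ p.1 p.2 - Φ p.2 * ψ p.1 p.2 := fun p => by ring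
    rw [finsum_congr hsplit, finsum_sub_distrib (hs1 Φ) (hs2 Φ), stepB Φ, stepA Φ]
    ring
  -- the two middle sums agree
  have hmid : (∑ᶠ p : V × V, (Φ₁ p.1 - Φ₁ p.2) * ψ p.1 p.2)
      = ∑ᶠ p : V × V, (Φ₂ p.1 - Φ₂ p.2) * ψ p.1 p.2 := by
    refine finsum_congr fun p => ?_
    rcases eq_or_ne (ψ p.1 p.2) 0 with h0 | h0
    · rw [h0, mul_zero, mul_zero]
    · have hadj : G.Adj p.1 p.2 := by
        by_contra h
        exact h0 (hedge _ _ h)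
      rcases lt_or_gt_of_ne h0 with hlt | hgt
      · rw [(hΦ₁ _ _ hadj).2.1 hlt, (hΦ₂ _ _ hadj).2.1 hlt]
      · rw [(hΦ₁ _ _ hadj).1 hgt, (hΦ₂ _ _ hadj).1 hgt]
  have := (stepC Φ₁).symm.trans (hmid.trans (stepC Φ₂))
  linarith
end

section
/- Let G = (V,E) be a locally finite tree, ρ a zero-sum assignment, and ψ the unique flow with div ψ = ρ. Then every good potential function Φ with respect to ψ satisfies ∑_{v∈V} Φ(v)ρ(v) = ∑_{e∈E} |ψ(e)|, where |ψ(e)| denotes the absolute value of the flow along edge e. -/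
theorem stmt_9 {V : Type*} (G : SimpleGraph V) (hlf : G.LocallyFinite)
    (hconn : G.Connected) (hacyc : G.IsAcyclic)
    (ρ : V → ℝ) (hρfin : (Function.support ρ).Finite) (hρsum : ∑ᶠ v, ρ v = 0)
    (ψ : V → V → ℝ)
    (hskew : ∀ v w, ψ v w = -ψ w v) (hedge : ∀ v w, ¬G.Adj v w → ψ v w = 0)
    (hfin : (Function.support fun p : V × V => ψ p.1 p.2).Finite)
    (hdiv : ∀ v, ∑ᶠ w, ψ v w = ρ v)
    (Φ : V → ℝ)
    (hΦ : ∀ x y, G.Adj x y →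
      (0 < ψ x y → Φ x - Φ y = 1) ∧ (ψ x y < 0 → Φ x - Φ y = -1) ∧
      (ψ x y = 0 → |Φ x - Φ y| ≤ 1))
    (F : Sym2 V → ℝ) (hF : ∀ x y, F s(x, y) = |ψ x y|) :
    ∑ᶠ v, Φ v * ρ v = ∑ᶠ e ∈ G.edgeSet, F e := by
  classical
  set P : Finset (V × V) := hfin.toFinset with hPdef
  have hPmem : ∀ p : V × V, p ∈ P ↔ ψ p.1 p.2 ≠ 0 := fun p => by
    simp [hPdef, Set.Finite.mem_toFinset, Function.mem_support]
  have hψself : ∀ v, ψ v v = 0 := fun v => by have := hskew v v; linarith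
  set T : Finset V := hρfin.toFinset ∪ (hfin.image Prod.fst).toFinset ∪
      (hfin.image Prod.snd).toFinset with hTdef
  have hρT : ∀ v, ρ v ≠ 0 → v ∈ T := by
    intro v hv
    simp only [hTdef, Finset.mem_union, Set.Finite.mem_toFinset]
    exact Or.inl (Or.inl hv)
  have hψT1 : ∀ v w, ψ v w ≠ 0 → v ∈ T := by
    intro v w h
    simp only [hTdef, Finset.mem_union, Set.Finite.mem_toFinset]
    exact Or.inl (Or.inr ⟨(v, w), h, rfl⟩)
  have hψT2 : ∀ v w, ψ v w ≠ 0 → w ∈ T := by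
    intro v w h
    simp only [hTdef, Finset.mem_union, Set.Finite.mem_toFinset]
    exact Or.inr ⟨(v, w), h, rfl⟩
  -- LHS as a finite sum
  have h1 : ∑ᶠ v, Φ v * ρ v = ∑ v ∈ T, Φ v * ρ v := by
    apply finsum_eq_finset_sum_of_support_subset
    intro v hv
    have : ρ v ≠ 0 := by
      intro h0; simp [Function.mem_support, h0] at hv
    exact hρT v this
  have h2 : ∀ v, ρ v = ∑ w ∈ T, ψ v w := by
    intro v
    rw [← hdiv v]
    apply finsum_eq_finset_sum_of_support_subset
    intro w hw
    exact hψT2 v w hw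
  have key : ∀ v w, (Φ v - Φ w) * ψ v w = |ψ v w| := by
    intro v w
    rcases lt_trichotomy (ψ v w) 0 with h | h | h
    · have hadj : G.Adj v w := by
        by_contra hn; rw [hedge v w hn] at h; exact lt_irrefl _ h
      rw [(hΦ v w hadj).2.1 h, abs_of_neg h]; ring
    · simp [h]
    · have hadj : G.Adj v w := by
        by_contra hn; rw [hedge v w hn] at h; exact lt_irrefl _ h
      rw [(hΦ v w hadj).1 h, abs_of_pos h]; ring
  have e1 : ∑ v ∈ T, Φ v * ρ v = ∑ v ∈ T, ∑ w ∈ T, Φ v * ψ v w := by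
    refine Finset.sum_congr rfl fun v _ => ?_
    rw [h2 v, Finset.mul_sum]
  have e2 : ∑ v ∈ T, ∑ w ∈ T, Φ w * ψ v w
      = -∑ v ∈ T, ∑ w ∈ T, Φ v * ψ v w := by
    rw [Finset.sum_comm, ← Finset.sum_neg_distrib]
    refine Finset.sum_congr rfl fun w _ => ?_
    rw [← Finset.sum_neg_distrib]
    refine Finset.sum_congr rfl fun v _ => ?_
    rw [hskew v w]; ring
  have e3 : 2 * (∑ v ∈ T, Φ v * ρ v)
      = ∑ v ∈ T, ∑ w ∈ T, (Φ v - Φ w) * ψ v w := by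
    have hsplit : ∑ v ∈ T, ∑ w ∈ T, (Φ v - Φ w) * ψ v w
        = (∑ v ∈ T, ∑ w ∈ T, Φ v * ψ v w)
          - ∑ v ∈ T, ∑ w ∈ T, Φ w * ψ v w := by
      rw [← Finset.sum_sub_distrib]
      refine Finset.sum_congr rfl fun v _ => ?_
      rw [← Finset.sum_sub_distrib]
      refine Finset.sum_congr rfl fun w _ => ?_
      ring
    rw [hsplit, e2, e1]; ring
  have e4 : ∑ v ∈ T, ∑ w ∈ T, (Φ v - Φ w) * ψ v w
      = ∑ p ∈ P, |ψ p.1 p.2| := by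
    rw [← Finset.sum_product']
    have hsub : P ⊆ T ×ˢ T := by
      intro p hp
      have h := (hPmem p).1 hp
      exact Finset.mem_product.2 ⟨hψT1 _ _ h, hψT2 _ _ h⟩
    rw [show (∑ p ∈ T ×ˢ T, (Φ p.1 - Φ p.2) * ψ p.1 p.2)
        = ∑ p ∈ T ×ˢ T, |ψ p.1 p.2| from
        Finset.sum_congr rfl fun p _ => key p.1 p.2]
    exact (Finset.sum_subset hsub (fun p _ hp => by
      have : ψ p.1 p.2 = 0 := by
        by_contra h; exact hp ((hPmem p).2 h)
      simp [this])).symm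
  set E' : Finset (Sym2 V) := P.image Sym2.mk.uncurry with hE'def
  have hE'sub : ∀ e ∈ E', e ∈ G.edgeSet := by
    intro e he
    rcases Finset.mem_image.1 he with ⟨p, hp, rfl⟩
    have h := (hPmem p).1 hp
    have hadj : G.Adj p.1 p.2 := by
      by_contra hn; exact h (hedge _ _ hn)
    exact hadj
  -- RHS as a finite sum
  have hRHS : ∑ᶠ e ∈ G.edgeSet, F e = ∑ e ∈ E', F e := by
    apply finsum_mem_eq_sum_of_inter_support_eq
    ext e
    simp only [Set.mem_inter_iff, Function.mem_support, Finset.coe_sort_coe,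
      Set.mem_setOf_eq]
    constructor
    · rintro ⟨hes, hne⟩
      refine ⟨?_, hne⟩
      induction e with
      | _ x y =>
        have : ψ x y ≠ 0 := by
          intro h0; exact hne (by rw [hF x y, h0, abs_zero])
        exact Finset.mem_coe.2 (Finset.mem_image.2 ⟨(x, y), (hPmem (x, y)).2 this, rfl⟩)
    · rintro ⟨he, hne⟩
      exact ⟨hE'sub e (Finset.mem_coe.1 he), hne⟩
  -- double counting
  have hcount : ∑ p ∈ P, |ψ p.1 p.2| = 2 * ∑ e ∈ E', F e := by
    have step1 : ∑ p ∈ P, |ψ p.1 p.2| = ∑ p ∈ P, F (Sym2.mk.uncurry p) := by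
      refine Finset.sum_congr rfl fun p _ => ?_
      rw [show Sym2.mk.uncurry p = s(p.1, p.2) from rfl, hF]
    rw [step1, Finset.sum_comp]
    have hcongr : (∑ e ∈ P.image Sym2.mk.uncurry, (P.filter fun p => Sym2.mk.uncurry p = e).card • F e)
        = ∑ e ∈ P.image Sym2.mk.uncurry, 2 * F e := by
      refine Finset.sum_congr rfl fun e he => ?_
      rcases Finset.mem_image.1 he with ⟨⟨x, y⟩, hp, rfl⟩
      have hne : ψ x y ≠ 0 := (hPmem (x, y)).1 hp
      have hxy : x ≠ y := by
        intro h; subst h; exact hne (hψself x)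
      have hfilter : (P.filter fun p => Sym2.mk.uncurry p = Sym2.mk.uncurry (x, y))
          = {(x, y), (y, x)} := by
        ext q
        simp only [Finset.mem_filter, Finset.mem_insert, Finset.mem_singleton]
        constructor
        · rintro ⟨hq, heq⟩
          rcases Sym2.mk_eq_mk_iff.1 heq with h | h
          · exact Or.inl h
          · exact Or.inr h
        · rintro (rfl | rfl)
          · exact ⟨hp, rfl⟩
          · refine ⟨(hPmem (y, x)).2 ?_, Sym2.mk_eq_mk_iff.2 (Or.inr rfl)⟩
            simp only
            rw [hskew y x]
            simpa using hne
      rw [hfilter, Finset.card_pair (by simp [hxy, Prod.ext_iff])]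
      push_cast [smul_eq_mul]
      ring
    rw [hcongr, ← Finset.mul_sum]
  rw [h1, hRHS]
  have := e3
  rw [e4, hcount] at this
  linarith
end

section
/- Let ε > 0 and let B be the open disk of radius 1+ε centered at 0 in ℂ. Suppose f : B∖{1} → ℂ is holomorphic with Taylor coefficients aₙ at 0, and suppose (1-z)f(z) extends to a holomorphic function g on all of B. Then aₙ = g(1) + o(1) as n → ∞. -/
open Filter

theorem stmt_11 (ε : ℝ) (hε : 0 < ε)
    (f : ℂ → ℂ) (hf : DifferentiableOn ℂ f (Metric.ball 0 (1 + ε) \ {1}))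
    (a : ℕ → ℂ)
    (ha : ∀ z : ℂ, ‖z‖ < 1 → HasSum (fun n => a n * z ^ n) (f z))
    (g : ℂ → ℂ) (hg : DifferentiableOn ℂ g (Metric.ball 0 (1 + ε)))
    (hgf : ∀ z ∈ Metric.ball (0 : ℂ) (1 + ε) \ {1}, g z = (1 - z) * f z) :
    Tendsto a atTop (nhds (g 1)) := by
  -- the "difference" coefficients c n = a n - a (n-1)
  set d : ℕ → ℂ := fun n => Nat.rec 0 (fun m _ => a m) n with hd
  set c : ℕ → ℂ := fun n => a n - d n with hc
  -- for ‖y‖ < 1, the series ∑ c n y^n converges to g y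
  have key : ∀ y : ℂ, ‖y‖ < 1 → HasSum (fun n => c n * y ^ n) (g y) := by
    intro y hy
    have h1 : HasSum (fun n => a n * y ^ n) (f y) := ha y hy
    have h2 : HasSum (fun n => d (n + 1) * y ^ (n + 1)) (y * f y) := by
      have := h1.mul_left y
      refine this.congr_fun fun n => ?_
      simp [hd]; ring
    have h2' : HasSum (fun n => d n * y ^ n) (y * f y) := by
      have := (hasSum_nat_add_iff (f := fun n => d n * y ^ n) 1).mp h2
      simpa [hd] using this
    have h3 : HasSum (fun n => c n * y ^ n) (f y - y * f y) := by
      refine (h1.sub h2').congr_fun fun n => ?_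
      simp [hc]; ring
    have hy1 : y ∈ Metric.ball (0 : ℂ) (1 + ε) \ {1} := by
      constructor
      · simp only [Metric.mem_ball, dist_zero_right]
        linarith
      · simp only [Set.mem_singleton_iff]
        intro h; rw [h] at hy; simp at hy
    rw [hgf y hy1]
    convert h3 using 1
    ring
  -- power series of g on a closed ball of radius 1 + ε/2
  set R : NNReal := ⟨1 + ε / 2, by positivity⟩ with hR
  have hball : Metric.closedBall (0 : ℂ) R ⊆ Metric.ball 0 (1 + ε) := by
    intro z hz
    simp only [Metric.mem_closedBall, Metric.mem_ball] at hz ⊢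
    have : (R : ℝ) = 1 + ε / 2 := rfl
    rw [this] at hz
    linarith
  have hp : HasFPowerSeriesOnBall g (cauchyPowerSeries g 0 R) 0 R :=
    (hg.mono hball).hasFPowerSeriesOnBall
      (by rw [← NNReal.coe_pos]; show (0:ℝ) < 1 + ε / 2; positivity)
  set p := cauchyPowerSeries g 0 R with hpdef
  set q := FormalMultilinearSeries.ofScalars ℂ c with hq
  -- q is a power series of g on the unit ball
  have hq1 : HasFPowerSeriesOnBall g q 0 1 := by
    constructor
    · -- 1 ≤ q.radius
      refine ENNReal.le_of_forall_nnreal_lt fun r hr => ?_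
      have hr1 : (r : ℝ) < 1 := by exact_mod_cast hr
      refine q.le_radius_of_summable_norm ?_
      have hs : Summable fun n => c n * (r : ℂ) ^ n := by
        refine (key (r : ℂ) ?_).summable
        simpa using hr1
      refine hs.norm.congr fun n => ?_
      rw [norm_mul, norm_pow, FormalMultilinearSeries.ofScalars_norm ℂ c n]
      norm_num
    · exact one_pos
    · intro y hy
      have hy' : ‖y‖ < 1 := by
        rw [← ENNReal.coe_one, Metric.eball_coe, NNReal.coe_one, mem_ball_zero_iff] at hy
        exact hy
      have := key y hy'
      simp only [zero_add]
      refine this.congr_fun fun n => ?_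
      rw [hq, FormalMultilinearSeries.ofScalars_apply_eq]
      simp [smul_eq_mul]
  -- uniqueness of power series: q = p
  have hqp : q = p := hq1.hasFPowerSeriesAt.eq_formalMultilinearSeries hp.hasFPowerSeriesAt
  -- evaluate at 1
  have h1mem : (1 : ℂ) ∈ Metric.eball (0 : ℂ) R := by
    rw [Metric.emetric_ball_nnreal]
    simp only [Metric.mem_ball, dist_zero_right, norm_one]
    show (1 : ℝ) < 1 + ε / 2
    linarith
  have hsum1 : HasSum (fun n => p n fun _ => (1 : ℂ)) (g 1) := by
    have := hp.hasSum h1mem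
    simpa using this
  rw [← hqp] at hsum1
  have hsumc : HasSum c (g 1) := by
    refine hsum1.congr_fun fun n => ?_
    rw [hq, FormalMultilinearSeries.ofScalars_apply_eq]
    simp
  -- partial sums of c telescope to a
  have htel : ∀ n, ∑ i ∈ Finset.range (n + 1), c i = a n := by
    intro n
    induction n with
    | zero => simp [hc, hd]
    | succ m ih =>
      rw [Finset.sum_range_succ, ih]
      simp [hc, hd]
  have := hsumc.tendsto_sum_nat
  have h2 := this.comp (tendsto_add_atTop_nat 1)
  refine h2.congr fun n => ?_
  exact htel n
end

section
/- Let ε > 0 and let B be the open disk of radius 1+ε centered at 0 in ℂ. Suppose f : B∖{1} → ℂ is holomorphic with Taylor coefficients aₙ at 0, and suppose (1-z)²f(z) extends to a holomorphic function g on all of B. Then aₙ = g(1)·n + (g(1) - g'(1)) + o(1) as n → ∞. -/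
open Filter

theorem stmt_12 (ε : ℝ) (hε : 0 < ε)
    (f : ℂ → ℂ) (hf : DifferentiableOn ℂ f (Metric.ball 0 (1 + ε) \ {1}))
    (a : ℕ → ℂ)
    (ha : ∀ z : ℂ, ‖z‖ < 1 → HasSum (fun n => a n * z ^ n) (f z))
    (g : ℂ → ℂ) (hg : DifferentiableOn ℂ g (Metric.ball 0 (1 + ε)))
    (hgf : ∀ z ∈ Metric.ball (0 : ℂ) (1 + ε) \ {1}, g z = (1 - z) ^ 2 * f z) :
    Tendsto (fun n => a n - (g 1 * n + (g 1 - deriv g 1))) atTop (nhds 0) := by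
  set b : ℕ → ℂ := fun n => a n - (g 1 * n + (g 1 - deriv g 1)) with hb_def
  set h₀ : ℂ → ℂ := fun z => (g z - g 1 - deriv g 1 * (z - 1)) / (z - 1) ^ 2 with hh₀
  have h₀1 : h₀ 1 = 0 := by simp [hh₀]
  have hmem1 : Metric.ball (0 : ℂ) (1 + ε) ∈ nhds (1 : ℂ) := by
    refine Metric.isOpen_ball.mem_nhds ?_
    simp [Complex.dist_eq]; linarith
  -- h₀ differentiable off 1
  have hd0 : DifferentiableOn ℂ h₀ (Metric.ball 0 (1 + ε) \ {1}) := by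
    apply DifferentiableOn.div
    · exact ((hg.mono Set.diff_subset).sub (differentiableOn_const _)).sub
        ((differentiableOn_const _).mul (differentiableOn_id.sub (differentiableOn_const _)))
    · exact (differentiableOn_id.sub (differentiableOn_const _)).pow 2
    · intro z hz
      have : z - 1 ≠ 0 := sub_ne_zero.mpr hz.2
      exact pow_ne_zero _ this
  -- g differentiable at 1
  have hg1 : DifferentiableAt ℂ g 1 := hg.differentiableAt hmem1
  -- little-o condition at 1
  have ho : (fun z => h₀ z - h₀ 1) =o[nhdsWithin 1 {(1 : ℂ)}ᶜ] fun z => (z - 1)⁻¹ := by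
    have hslope : Tendsto (fun z => slope g 1 z - deriv g 1) (nhdsWithin 1 {(1 : ℂ)}ᶜ)
        (nhds 0) := by
      have := hasDerivAt_iff_tendsto_slope.mp hg1.hasDerivAt
      simpa using this.sub_const (deriv g 1)
    have h1 : (fun z => slope g 1 z - deriv g 1) =o[nhdsWithin 1 {(1 : ℂ)}ᶜ]
        (fun _ => (1 : ℂ)) := (Asymptotics.isLittleO_one_iff ℂ).mpr hslope
    have h2 := h1.mul_isBigO (Asymptotics.isBigO_refl (fun z : ℂ => (z - 1)⁻¹)
      (nhdsWithin 1 {(1 : ℂ)}ᶜ))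
    refine Asymptotics.IsLittleO.congr' h2 ?_ (Filter.Eventually.of_forall fun x => one_mul _)
    · filter_upwards [self_mem_nhdsWithin] with z hz
      have hz1 : z - 1 ≠ 0 := sub_ne_zero.mpr hz
      rw [h₀1, sub_zero, hh₀]
      simp only [slope_def_field, div_eq_mul_inv]
      field_simp
  -- the extended function
  set h : ℂ → ℂ := Function.update h₀ 1 (limUnder (nhdsWithin 1 {(1 : ℂ)}ᶜ) h₀) with hh
  have hdh : DifferentiableOn ℂ h (Metric.ball 0 (1 + ε)) :=
    Complex.differentiableOn_update_limUnder_of_isLittleO hmem1 hd0 ho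
  -- power series of h on the unit ball with coefficients b
  have hbsum : ∀ z : ℂ, ‖z‖ < 1 → HasSum (fun n => b n * z ^ n) (h z) := by
    intro z hz
    have hz1 : z ≠ 1 := by rintro rfl; simp at hz
    have hz1' : (1 : ℂ) - z ≠ 0 := sub_ne_zero.mpr (Ne.symm hz1)
    have hzball : z ∈ Metric.ball (0 : ℂ) (1 + ε) \ {1} := by
      constructor
      · simp only [Metric.mem_ball, Complex.dist_eq, sub_zero]
        calc ‖z‖ = ‖z‖ := rfl
          _ < 1 := hz
          _ < 1 + ε := by linarith
      · simpa using hz1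
    have hgz : g z = (1 - z) ^ 2 * f z := hgf z hzball
    have hhz : h z = (g z - g 1 - deriv g 1 * (z - 1)) / (z - 1) ^ 2 := by
      rw [hh, Function.update_of_ne hz1]
    have S1 := ha z hz
    have S2 := hasSum_geometric_of_norm_lt_one hz
    have S3 := hasSum_coe_mul_geometric_of_norm_lt_one hz
    have T := (S1.sub ((S3.mul_left (g 1)).add (S2.mul_left (g 1 - deriv g 1))))
    have heqf : (fun n : ℕ => a n * z ^ n -
        (g 1 * (n * z ^ n) + (g 1 - deriv g 1) * z ^ n)) = fun n => b n * z ^ n := by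
      funext n; rw [hb_def]; ring
    rw [heqf] at T
    convert T using 1
    · rfl
    rw [hhz, hgz]
    have hz1'' : z - 1 ≠ 0 := sub_ne_zero.mpr hz1
    field_simp
    ring
  -- formal series with scalar coefficients b
  set q : FormalMultilinearSeries ℂ ℂ ℂ := FormalMultilinearSeries.ofScalars ℂ b with hq_def
  have hqnorm : ∀ n, ‖q n‖ = ‖b n‖ := fun n => FormalMultilinearSeries.ofScalars_norm ..
  have hqr : (1 / 2 : ENNReal) ≤ q.radius := by
    have := (hbsum ((1 : ℂ) / 2) (by norm_num)).summable.tendsto_atTop_zero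
    have hT : Tendsto (fun n => ‖q n‖ * ((1 : NNReal) / 2 : NNReal) ^ n) atTop (nhds 0) := by
      have := this.norm
      simp only [norm_zero] at this
      refine this.congr fun n => ?_
      rw [hqnorm, norm_mul, norm_pow]
      norm_num
    have := q.le_radius_of_tendsto hT
    simpa using this
  have hqsum : HasFPowerSeriesOnBall h q 0 (1 / 2) := by
    refine ⟨hqr, by norm_num, ?_⟩
    intro y hy
    have hy' : ‖y‖ < 1 := by
      rw [mem_emetric_ball_zero_iff] at hy
      have h1 : (‖y‖₊ : ENNReal) < 1 := hy.trans (by norm_num)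
      have h2 : ‖y‖₊ < 1 := by exact_mod_cast h1
      exact_mod_cast h2
    have := hbsum y hy'
    refine HasSum.congr_fun (by simpa using this) fun n => ?_
    rw [hq_def, FormalMultilinearSeries.ofScalars_apply_eq]
    simp [smul_eq_mul, mul_comm]
  -- Cauchy power series on a bigger ball
  have hεpos : (0 : ℝ) < 1 + ε / 2 := by linarith
  set R : NNReal := ⟨1 + ε / 2, le_of_lt hεpos⟩ with hR_def
  have hsub : Metric.closedBall (0 : ℂ) (R : ℝ) ⊆ Metric.ball 0 (1 + ε) := by
    intro z hz
    simp only [Metric.mem_closedBall, Metric.mem_ball] at hz ⊢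
    have : (R : ℝ) = 1 + ε / 2 := rfl
    rw [this] at hz; linarith
  have hp : HasFPowerSeriesOnBall h (cauchyPowerSeries h 0 R) 0 R :=
    (hdh.mono hsub).hasFPowerSeriesOnBall (by rw [← NNReal.coe_lt_coe]; exact hεpos)
  have hpq : cauchyPowerSeries h 0 R = q :=
    hp.hasFPowerSeriesAt.eq_formalMultilinearSeries hqsum.hasFPowerSeriesAt
  have hradius : (1 : ENNReal) < q.radius := by
    calc (1 : ENNReal) < (R : ENNReal) := by
          rw [← ENNReal.coe_one, ENNReal.coe_lt_coe]
          rw [← NNReal.coe_lt_coe]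
          show (1 : ℝ) < 1 + ε / 2
          linarith
      _ ≤ (cauchyPowerSeries h 0 R).radius := hp.r_le
      _ = q.radius := by rw [hpq]
  -- conclude
  have hsmall := q.isLittleO_one_of_lt_radius (r := 1) (by simpa using hradius)
  have htend : Tendsto (fun n => ‖b n‖) atTop (nhds 0) := by
    have := hsmall.tendsto_div_nhds_zero
    simp only [div_one] at this
    refine this.congr fun n => ?_
    rw [hqnorm]
    simp
  exact tendsto_zero_iff_norm_tendsto_zero.mpr htend
end

section
/- Fix a real α ∈ [0,1) and an integer q ≥ 2. Suppose G̃(x,y) ∈ ℝ[[x,y]] and γ̃(y) ∈ ℝ[[y]] are formal power series satisfying qx = ((q+1)(x - αxy) - q(1-α)y - (1-α)x²y)·G̃(x,y) + (-x + αxy + q(1-α)y)·γ̃(y). Then the pair (G̃, γ̃) is unique, and necessarily γ̃(y) = G̃(0,y). -/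
/-- The variable `x` in `ℝ[[x,y]]`, realized as `PowerSeries (PowerSeries ℝ)`
(outer variable `x`, inner variable `y`). -/
noncomputable def psX : PowerSeries (PowerSeries ℝ) := PowerSeries.X

/-- The variable `y`. -/
noncomputable def psY : PowerSeries (PowerSeries ℝ) := PowerSeries.C PowerSeries.X

/-- The constant power series with value `r`. -/
noncomputable def psC (r : ℝ) : PowerSeries (PowerSeries ℝ) :=
  PowerSeries.C (PowerSeries.C r)

/-- The functional equation (♪) for the generating functions of lazy simple random
walk on the `(q+1)`-regular tree. -/
def TreeFuncEq (α : ℝ) (q : ℕ) (G : PowerSeries (PowerSeries ℝ))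
    (γ : PowerSeries ℝ) : Prop :=
  psC (q : ℝ) * psX =
    ((psC (q : ℝ) + 1) * (psX - psC α * psX * psY) - psC (q : ℝ) * (1 - psC α) * psY
        - (1 - psC α) * psX ^ 2 * psY) * G
      + (-psX + psC α * psX * psY + psC (q : ℝ) * (1 - psC α) * psY) * PowerSeries.C γ

lemma C_dvd_of_forall_coeff {R : Type*} [CommRing R] (a : R) (f : PowerSeries R)
    (h : ∀ n, a ∣ PowerSeries.coeff n f) : PowerSeries.C a ∣ f := by
  refine ⟨PowerSeries.mk fun n => (h n).choose, ?_⟩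
  ext n
  rw [PowerSeries.coeff_C_mul, PowerSeries.coeff_mk]
  exact (h n).choose_spec

lemma eq_zero_of_forall_X_pow_dvd {R : Type*} [CommRing R] (f : PowerSeries R)
    (h : ∀ k, (PowerSeries.X : PowerSeries R) ^ k ∣ f) : f = 0 := by
  ext n
  have := PowerSeries.X_pow_dvd_iff.mp (h (n + 1)) n (Nat.lt_succ_self n)
  simpa using this

/-- Applying the constant coefficient (in `x`) to the functional equation. -/
lemma tree_const (α : ℝ) (hα1 : α < 1) (q : ℕ) (hq : 2 ≤ q)
    (G : PowerSeries (PowerSeries ℝ)) (γ : PowerSeries ℝ)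
    (h : TreeFuncEq α q G γ) :
    γ = PowerSeries.constantCoeff G := by
  have h' := congrArg (PowerSeries.constantCoeff) h
  simp only [TreeFuncEq, psX, psY, psC, map_mul, map_add, map_sub, map_neg, map_one, map_pow,
    PowerSeries.constantCoeff_X, PowerSeries.constantCoeff_C] at h'
  have key : (PowerSeries.C (q : ℝ)) * (1 - PowerSeries.C α) * PowerSeries.X *
      (γ - PowerSeries.constantCoeff G) = 0 := by
    linear_combination -h'
  have hq0 : (PowerSeries.C (q : ℝ)) ≠ 0 := by
    simp only [ne_eq, map_eq_zero, Nat.cast_eq_zero]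
    omega
  have hα0 : (1 - PowerSeries.C α) ≠ 0 := by
    rw [show (1 : PowerSeries ℝ) - PowerSeries.C α = PowerSeries.C (1 - α) by
      simp [map_sub]]
    simp only [ne_eq, map_eq_zero]
    intro hc; linarith
  have hX : (PowerSeries.X : PowerSeries ℝ) ≠ 0 := PowerSeries.X_ne_zero
  rcases mul_eq_zero.mp key with hl | hfin
  · rcases mul_eq_zero.mp hl with hl2 | hx
    · rcases mul_eq_zero.mp hl2 with h1 | h2
      · exact absurd h1 hq0
      · exact absurd h2 hα0
    · exact absurd hx hX
  · exact sub_eq_zero.mp hfin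

theorem stmt_13 (α : ℝ) (hα0 : 0 ≤ α) (hα1 : α < 1) (q : ℕ) (hq : 2 ≤ q)
    (G₁ G₂ : PowerSeries (PowerSeries ℝ)) (γ₁ γ₂ : PowerSeries ℝ)
    (h₁ : TreeFuncEq α q G₁ γ₁) (h₂ : TreeFuncEq α q G₂ γ₂) :
    G₁ = G₂ ∧ γ₁ = γ₂ ∧ γ₁ = PowerSeries.constantCoeff G₁ := by
  set D : PowerSeries (PowerSeries ℝ) := G₁ - G₂ with hDdef
  set d : PowerSeries ℝ := γ₁ - γ₂ with hddef
  have hc₁ := tree_const α hα1 q hq G₁ γ₁ h₁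
  have hc₂ := tree_const α hα1 q hq G₂ γ₂ h₂
  have hccD : PowerSeries.constantCoeff D = d := by
    rw [hDdef, hddef, map_sub, hc₁, hc₂]
  -- the rearranged subtracted equation
  have E : (1 - psC α * psY) * psX
        * ((psC (q : ℝ) + 1) * D - PowerSeries.C d)
      = psY * ((1 - psC α) * (psC (q : ℝ) * D + psX ^ 2 * D
          - psC (q : ℝ) * PowerSeries.C d)) := by
    unfold TreeFuncEq at h₁ h₂
    rw [hDdef, hddef, map_sub]
    linear_combination h₂ - h₁
  -- units
  have hu1 : IsUnit ((1 : PowerSeries ℝ) - PowerSeries.C α * PowerSeries.X) := by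
    rw [PowerSeries.isUnit_iff_constantCoeff]
    simp
  have huq : IsUnit (PowerSeries.C (q : ℝ)) := by
    refine IsUnit.map _ (isUnit_iff_ne_zero.mpr ?_)
    simp only [ne_eq, Nat.cast_eq_zero]; omega
  have huq1 : IsUnit (psC ((q : ℝ) + 1)) := by
    refine IsUnit.map _ (IsUnit.map _ (isUnit_iff_ne_zero.mpr ?_))
    positivity
  -- main induction
  have main : ∀ k : ℕ, ((PowerSeries.X : PowerSeries ℝ) ^ k ∣ d) ∧ (psY ^ k ∣ D) := by
    intro k
    induction k with
    | zero => simp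
    | succ k ih =>
      obtain ⟨⟨e, he⟩, Dk, hDk⟩ := ih
      have hCd : PowerSeries.C d = psY ^ k * PowerSeries.C e := by
        rw [he, psY, map_mul, map_pow]
      set F : PowerSeries (PowerSeries ℝ) :=
        (psC (q : ℝ) + 1) * D - PowerSeries.C d with hF
      set W : PowerSeries (PowerSeries ℝ) := (1 - psC α) * (psC (q : ℝ) * Dk + psX ^ 2 * Dk
          - psC (q : ℝ) * PowerSeries.C e) with hW
      have hL : (1 - psC α * psY) * (psX * F) = psY ^ (k + 1) * W := by
        rw [hF, hW, ← mul_assoc, E, hDk, hCd]; ring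
      have hcoef : ∀ n : ℕ,
          (PowerSeries.X : PowerSeries ℝ) ^ (k + 1) ∣ PowerSeries.coeff n F := by
        intro n
        have h1 := congrArg (PowerSeries.coeff (n + 1)) hL
        have e1 : (1 - psC α * psY) * (psX * F)
            = psX * F - psC α * psY * (psX * F) := by ring
        rw [e1] at h1
        simp only [map_sub, psC, psY, psX, ← map_mul, PowerSeries.coeff_C_mul,
          PowerSeries.coeff_succ_X_mul, ← map_pow] at h1
        have h2 : ((1 : PowerSeries ℝ) - PowerSeries.C α * PowerSeries.X)
              * PowerSeries.coeff n F
            = (PowerSeries.X : PowerSeries ℝ) ^ (k + 1)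
              * PowerSeries.coeff (n + 1) W := by
          linear_combination h1
        exact (hu1.dvd_mul_left).mp ⟨PowerSeries.coeff (n + 1) W, h2⟩
      have hFdvd : psY ^ (k + 1) ∣ F := by
        rw [psY, ← map_pow]
        exact C_dvd_of_forall_coeff _ _ hcoef
      have hccF : PowerSeries.constantCoeff F
          = PowerSeries.C (q : ℝ) * d := by
        simp only [hF, psC, map_sub, map_mul, map_add, map_one,
          PowerSeries.constantCoeff_C, hccD]
        ring
      have hdd : (PowerSeries.X : PowerSeries ℝ) ^ (k + 1) ∣ d := by
        obtain ⟨H, hH⟩ := hFdvd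
        have h3 := congrArg (PowerSeries.constantCoeff) hH
        rw [hccF, map_mul, map_pow] at h3
        have hccY : PowerSeries.constantCoeff psY = PowerSeries.X := by
          simp [psY]
        rw [hccY] at h3
        exact (huq.dvd_mul_left).mp ⟨PowerSeries.constantCoeff H, h3⟩
      refine ⟨hdd, ?_⟩
      have hCd' : psY ^ (k + 1) ∣ PowerSeries.C d := by
        obtain ⟨e', he'⟩ := hdd
        rw [he', psY, map_mul, map_pow]
        exact Dvd.intro _ rfl
      have hqD : psY ^ (k + 1) ∣ psC ((q : ℝ) + 1) * D := by
        have hpsC : psC ((q : ℝ) + 1) = psC (q : ℝ) + 1 := by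
          rw [psC, psC, map_add, map_one, map_add, map_one]
        have h4 : psC ((q : ℝ) + 1) * D = F + PowerSeries.C d := by
          rw [hF, hpsC]; ring
        rw [h4]
        exact dvd_add hFdvd hCd'
      exact (huq1.dvd_mul_left).mp hqD
  -- conclude
  have hd0 : d = 0 := eq_zero_of_forall_X_pow_dvd d fun k => (main k).1
  have hD0 : D = 0 := by
    refine PowerSeries.ext fun n => ?_
    have hk : ∀ k, (PowerSeries.X : PowerSeries ℝ) ^ k ∣ PowerSeries.coeff n D := by
      intro k
      obtain ⟨Dk, hDk⟩ := (main k).2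
      rw [hDk, psY, ← map_pow, PowerSeries.coeff_C_mul]
      exact Dvd.intro _ rfl
    rw [eq_zero_of_forall_X_pow_dvd _ hk]
    simp
  exact ⟨sub_eq_zero.mp hD0, sub_eq_zero.mp hd0, hc₁⟩
end

section
/- Let q ≥ 2 be an integer and X, Y adjacent vertices in the infinite (q+1)-regular tree. Let σᵤⁿ be the uniform probability measure on the sphere of radius n centered at u. Then the 1-Wasserstein distance satisfies W₁(σ_Xⁿ, σ_Yⁿ) = 2·((q-1)/(q+1))·n + 1 for every integer n ≥ 0. -/
/-- The uniform probability measure (as a density) on the sphere of radius `n`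
centered at `u` in a `(q+1)`-regular tree. -/
noncomputable def sphereMeasure {V : Type*} (G : SimpleGraph V) (q n : ℕ) (u : V) : V → ℝ :=
  fun v => if G.dist u v = n then
      (if n = 0 then 1 else (((q : ℝ) + 1) * (q : ℝ) ^ (n - 1))⁻¹)
    else 0

/-- The set of total costs of transport plans between `μ` and `ν`, with cost
given by the graph distance. -/
def transportCosts {V : Type*} (G : SimpleGraph V) (μ ν : V → ℝ) : Set ℝ :=
  {c | ∃ π : V → V → ℝ, (∀ v w, 0 ≤ π v w) ∧
    (Function.support fun p : V × V => π p.1 p.2).Finite ∧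
    (∀ v, ∑ᶠ w, π v w = μ v) ∧ (∀ w, ∑ᶠ v, π v w = ν w) ∧
    ∑ᶠ p : V × V, (G.dist p.1 p.2 : ℝ) * π p.1 p.2 = c}

open SimpleGraph



namespace W1aux

variable {V : Type*} {G : SimpleGraph V}

/-- `v` lies on the `a`-side of the edge `(a,b)`. -/
def Side (G : SimpleGraph V) (a b v : V) : Prop :=
  (G \ SimpleGraph.fromEdgeSet {s(a,b)}).Reachable a v

lemma side_swap_graph (a b : V) :
    (G \ SimpleGraph.fromEdgeSet {s(b,a)}) = (G \ SimpleGraph.fromEdgeSet {s(a,b)}) := by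
  rw [Sym2.eq_swap]

lemma reachable_del_of_walk {a b u v : V} (p : G.Walk u v) (h : s(a,b) ∉ p.edges) :
    (G \ SimpleGraph.fromEdgeSet {s(a,b)}).Reachable u v := by
  refine ⟨p.transfer _ fun e ep => ?_⟩
  simp only [edgeSet_sdiff, edgeSet_fromEdgeSet, edgeSet_sdiff_sdiff_isDiag, Set.mem_diff,
    Set.mem_singleton_iff]
  exact ⟨p.edges_subset_edgeSet ep, fun h' => h (h' ▸ ep)⟩

lemma adj_del {a b x y : V} (h : G.Adj x y) (hne : s(x,y) ≠ s(a,b)) :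
    (G \ SimpleGraph.fromEdgeSet {s(a,b)}).Adj x y := by
  simp only [sdiff_adj, fromEdgeSet_adj, Set.mem_singleton_iff]
  exact ⟨h, fun hc => hne hc.1⟩

lemma side_refl (a b : V) : Side G a b a := Reachable.refl a

lemma side_step {a b x y : V} (p : G.Walk x y) :
    (Side G a b x ∨ Side G b a x) → (Side G a b y ∨ Side G b a y) := by
  induction p with
  | nil => exact id
  | @cons c d e h p ih =>
      intro hc
      refine ih ?_
      by_cases he : s(c, d) = s(a, b)
      · rcases Sym2.eq_iff.mp he with ⟨h1, h2⟩ | ⟨h1, h2⟩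
        · rw [h2]; exact Or.inr (side_refl b a)
        · rw [h2]; exact Or.inl (side_refl a b)
      · rcases hc with hx | hx
        · exact Or.inl (hx.trans (adj_del h (fun hc => he hc)).reachable)
        · refine Or.inr (hx.trans ?_)
          have h2 : (G \ SimpleGraph.fromEdgeSet {s(b,a)}).Adj c d := by
            rw [side_swap_graph]
            exact adj_del h he
          exact h2.reachable

lemma side_total (hconn : G.Connected) (a b v : V) :
    Side G a b v ∨ Side G b a v := by
  obtain ⟨p⟩ := (hconn a v)
  exact side_step p (Or.inl (side_refl a b))


lemma side_not_both (hacyc : G.IsAcyclic) {a b v : V} (hab : G.Adj a b) :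
    ¬(Side G a b v ∧ Side G b a v) := by
  rintro ⟨h1, h2⟩
  have hbridge := (isAcyclic_iff_forall_adj_isBridge.mp hacyc) hab
  rw [isBridge_iff] at hbridge
  rw [Side, side_swap_graph] at h2
  exact hbridge (h1.trans h2.symm)

lemma dist_of_otherside (hconn : G.Connected) (hacyc : G.IsAcyclic) {a b v : V}
    (hab : G.Adj a b) (hside : Side G b a v) :
    G.dist a v = G.dist b v + 1 := by
  have hd1 : G.dist a b = 1 := dist_eq_one_iff_adj.mpr hab
  refine le_antisymm ?_ ?_
  · calc G.dist a v ≤ G.dist a b + G.dist b v := hconn.dist_triangle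
      _ = G.dist b v + 1 := by omega
  · haveI := Classical.decEq V
    obtain ⟨p, hp⟩ := (hconn a v).exists_walk_length_eq_dist
    have hmem : s(a, b) ∈ p.edges := by
      by_contra hne
      exact side_not_both hacyc hab ⟨reachable_del_of_walk p hne, hside⟩
    have hb : b ∈ p.support := p.snd_mem_support_of_mem_edges hmem
    have hsplit := p.take_spec hb
    have hlen : (p.takeUntil b hb).length + (p.dropUntil b hb).length = p.length := by
      rw [← Walk.length_append, hsplit]
    have h1 : G.dist a b ≤ (p.takeUntil b hb).length := dist_le _
    have h2 : G.dist b v ≤ (p.dropUntil b hb).length := dist_le _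
    omega

lemma dist_cross (hconn : G.Connected) (hacyc : G.IsAcyclic) {a b u w : V}
    (hab : G.Adj a b) (hu : Side G a b u) (hw : Side G b a w) :
    G.dist u w = G.dist u a + 1 + G.dist b w := by
  have haw : G.dist a w = G.dist b w + 1 := dist_of_otherside hconn hacyc hab hw
  refine le_antisymm ?_ ?_
  · calc G.dist u w ≤ G.dist u a + G.dist a w := hconn.dist_triangle
      _ = G.dist u a + 1 + G.dist b w := by omega
  · haveI := Classical.decEq V
    obtain ⟨p, hp⟩ := (hconn u w).exists_walk_length_eq_dist
    have hmem : s(a, b) ∈ p.edges := by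
      by_contra hne
      have h3 : Side G a b w := hu.trans (reachable_del_of_walk p hne)
      exact side_not_both hacyc hab ⟨h3, hw⟩
    have ha : a ∈ p.support := p.fst_mem_support_of_mem_edges hmem
    have hsplit := p.take_spec ha
    have hlen : (p.takeUntil a ha).length + (p.dropUntil a ha).length = p.length := by
      rw [← Walk.length_append, hsplit]
    have h1 : G.dist u a ≤ (p.takeUntil a ha).length := dist_le _
    have h2 : G.dist a w ≤ (p.dropUntil a ha).length := dist_le _
    omega

/-- For `v` on the `a`-side of edge `(a,b)`, `dist v b = dist v a + 1`. -/
lemma dist_side (hconn : G.Connected) (hacyc : G.IsAcyclic) {a b v : V}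
    (hab : G.Adj a b) (hside : Side G a b v) :
    G.dist b v = G.dist a v + 1 := by
  have := dist_of_otherside hconn hacyc hab.symm (by exact hside)
  exact this


lemma dcomm (G : SimpleGraph V) (x y : V) : G.dist x y = G.dist y x :=
  SimpleGraph.dist_comm

lemma side_iff_dist (hconn : G.Connected) (hacyc : G.IsAcyclic) {a b v : V}
    (hab : G.Adj a b) : Side G a b v ↔ G.dist b v = G.dist a v + 1 := by
  constructor
  · exact dist_side hconn hacyc hab
  · intro h
    rcases side_total hconn a b v with hs | hs
    · exact hs
    · exfalso
      have := dist_of_otherside hconn hacyc hab hs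
      omega

lemma exists_parent (hconn : G.Connected) {r v : V} (h : G.dist r v ≠ 0) :
    ∃ p, G.Adj v p ∧ G.dist r p + 1 = G.dist r v := by
  obtain ⟨p, hp⟩ := (hconn r v).exists_walk_length_eq_dist
  set q := p.reverse with hq
  have hql : q.length = G.dist r v := by rw [hq, Walk.length_reverse, hp]
  clear_value q
  cases q with
  | nil => exact absurd SimpleGraph.dist_self h
  | @cons _ x _ hadj q' =>
      refine ⟨x, hadj, ?_⟩
      have h1 : G.dist r x ≤ q'.length := by
        rw [SimpleGraph.dist_comm]; exact dist_le q'
      have h2 : G.dist r v ≤ G.dist r x + 1 := by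
        calc G.dist r v ≤ G.dist r x + G.dist x v := hconn.dist_triangle
          _ ≤ G.dist r x + 1 := by
              have : G.dist x v ≤ 1 := by
                rw [SimpleGraph.dist_comm]; exact dist_le hadj.toWalk
              omega
      simp only [Walk.length_cons] at hql
      omega

lemma parent_unique (hconn : G.Connected) (hacyc : G.IsAcyclic) {r v p₁ p₂ : V}
    (h1 : G.Adj v p₁) (hd1 : G.dist r p₁ + 1 = G.dist r v)
    (h2 : G.Adj v p₂) (hd2 : G.dist r p₂ + 1 = G.dist r v) : p₁ = p₂ := by
  have hr : Side G p₁ v r := by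
    rcases side_total hconn p₁ v r with hs | hs
    · exact hs
    · exfalso
      have := dist_of_otherside hconn hacyc h1.symm hs
      rw [dcomm G p₁ r, dcomm G v r] at this
      omega
  have hp2 : Side G p₁ v p₂ := by
    rcases side_total hconn p₁ v p₂ with hs | hs
    · exact hs
    · exfalso
      have := dist_cross hconn hacyc h1.symm hr hs
      have hvp : G.dist v p₂ = 1 := dist_eq_one_iff_adj.mpr h2

      omega
  have := dist_cross hconn hacyc h1.symm hp2 (side_refl v p₁)
  have hvp : G.dist p₂ v = 1 := dist_eq_one_iff_adj.mpr h2.symm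
  have hvv : G.dist v v = 0 := by simp
  have : G.dist p₂ p₁ = 0 := by omega
  exact ((hconn.dist_eq_zero_iff).mp this).symm

lemma nbr_dichotomy (hconn : G.Connected) (hacyc : G.IsAcyclic) {v w : V}
    (h : G.Adj v w) (r : V) :
    G.dist r w = G.dist r v + 1 ∨ G.dist r v = G.dist r w + 1 := by
  rcases side_total hconn v w r with hs | hs
  · left
    have := dist_side hconn hacyc h hs
    rwa [dcomm G w r, dcomm G v r] at this
  · right
    have := dist_side hconn hacyc h.symm hs
    rwa [dcomm G v r, dcomm G w r] at this


lemma neighborSet_finite {q : ℕ} (hdeg : ∀ v : V, (G.neighborSet v).ncard = q + 1)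
    (v : V) : (G.neighborSet v).Finite := by
  by_contra h
  have := Set.Infinite.ncard (h : (G.neighborSet v).Infinite)
  rw [hdeg v] at this
  omega

lemma children_ncard (hconn : G.Connected) (hacyc : G.IsAcyclic) {q : ℕ}
    (hdeg : ∀ v : V, (G.neighborSet v).ncard = q + 1) {r v : V} (hrv : r ≠ v) :
    {w | G.Adj v w ∧ G.dist r w = G.dist r v + 1}.ncard = q := by
  have hd0 : G.dist r v ≠ 0 := fun h => hrv (hconn.dist_eq_zero_iff.mp h)
  set P : Set V := {w | G.Adj v w ∧ G.dist r w + 1 = G.dist r v} with hP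
  set C : Set V := {w | G.Adj v w ∧ G.dist r w = G.dist r v + 1} with hC
  obtain ⟨p, hpadj, hpd⟩ := exists_parent hconn hd0
  have hPsing : P = {p} := by
    ext w
    simp only [hP, Set.mem_setOf_eq, Set.mem_singleton_iff]
    constructor
    · rintro ⟨hw1, hw2⟩
      exact parent_unique hconn hacyc hw1 hw2 hpadj hpd
    · rintro rfl
      exact ⟨hpadj, hpd⟩
  have hU : G.neighborSet v = P ∪ C := by
    ext w
    simp only [mem_neighborSet, hP, hC, Set.mem_union, Set.mem_setOf_eq]
    constructor
    · intro hw
      rcases nbr_dichotomy hconn hacyc hw r with h | h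
      · right; exact ⟨hw, h⟩
      · left; exact ⟨hw, by omega⟩
    · rintro (⟨hw, _⟩ | ⟨hw, _⟩) <;> exact hw
  have hfin : (G.neighborSet v).Finite := neighborSet_finite hdeg v
  have hfinP : P.Finite := hfin.subset (by rw [hU]; exact Set.subset_union_left)
  have hfinC : C.Finite := hfin.subset (by rw [hU]; exact Set.subset_union_right)
  have hdisj : Disjoint P C := by
    rw [Set.disjoint_left]
    rintro w ⟨_, h1⟩ ⟨_, h2⟩
    omega
  have := hdeg v
  rw [hU, Set.ncard_union_eq hdisj hfinP hfinC, hPsing, Set.ncard_singleton] at this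
  omega

/-- The set of vertices on the `a`-side of edge `(a,b)` at distance `k` from `a`. -/
def lvl (G : SimpleGraph V) (a b : V) (k : ℕ) : Set V :=
  {v | Side G a b v ∧ G.dist a v = k}

lemma lvl_zero (hconn : G.Connected) (a b : V) : lvl G a b 0 = {a} := by
  ext v
  simp only [lvl, Set.mem_setOf_eq, Set.mem_singleton_iff]
  constructor
  · rintro ⟨_, h⟩
    exact (hconn.dist_eq_zero_iff.mp h).symm
  · rintro rfl
    exact ⟨side_refl _ _, by simp⟩

/-- The side-condition in a child set is automatic. -/
lemma children_side_auto (hconn : G.Connected) (hacyc : G.IsAcyclic) {a b p w : V}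
    (hab : G.Adj a b) (hp : Side G a b p) (hp0 : G.dist a p ≠ 0) (hadj : G.Adj p w) :
    Side G a b w := by
  rcases side_total hconn a b w with hs | hs
  · exact hs
  · exfalso
    have := dist_cross hconn hacyc hab hp hs
    have h1 : G.dist p w = 1 := dist_eq_one_iff_adj.mpr hadj
    rw [dcomm G p a] at this
    omega

/-- Any neighbor of an `a`-side vertex one step closer to `a` is `a`-side. -/
lemma parent_side_auto (hconn : G.Connected) (hacyc : G.IsAcyclic) {a b v w : V}
    (hab : G.Adj a b) (hv : Side G a b v) (hadj : G.Adj v w)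
    (hw : G.dist a w + 1 = G.dist a v) : Side G a b w := by
  rcases side_total hconn a b w with hs | hs
  · exact hs
  · exfalso
    have := dist_cross hconn hacyc hab hv hs
    have h1 : G.dist v w = 1 := dist_eq_one_iff_adj.mpr hadj
    rw [dcomm G v a] at this
    omega

lemma children_lvl_ncard (hconn : G.Connected) (hacyc : G.IsAcyclic) {q : ℕ}
    (hdeg : ∀ v : V, (G.neighborSet v).ncard = q + 1) {a b : V} (hab : G.Adj a b)
    {k : ℕ} {p : V} (hp : p ∈ lvl G a b k) :
    {w | G.Adj p w ∧ Side G a b w ∧ G.dist a w = k + 1}.ncard = q := by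
  obtain ⟨hside, hdist⟩ := hp
  rcases Nat.eq_zero_or_pos k with rfl | hk
  · -- p = a
    have hpa : p = a := (hconn.dist_eq_zero_iff.mp hdist).symm
    subst hpa
    have hset : {w | G.Adj p w ∧ Side G p b w ∧ G.dist p w = 0 + 1}
        = G.neighborSet p \ {b} := by
      ext w
      simp only [Set.mem_setOf_eq, Set.mem_diff, mem_neighborSet, Set.mem_singleton_iff]
      constructor
      · rintro ⟨h1, h2, _⟩
        refine ⟨h1, ?_⟩
        rintro rfl
        exact side_not_both hacyc hab ⟨h2, side_refl w p⟩
      · rintro ⟨h1, h2⟩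
        refine ⟨h1, ?_, by rw [zero_add]; exact dist_eq_one_iff_adj.mpr h1⟩
        refine Reachable.mono le_rfl (adj_del h1 ?_).reachable
        intro hc
        rcases Sym2.eq_iff.mp hc with ⟨-, h⟩ | ⟨h, h'⟩
        · exact h2 h
        · subst h'; exact G.irrefl h1
    rw [hset]
    have hbmem : b ∈ G.neighborSet p := hab
    have hfin := neighborSet_finite hdeg p
    rw [Set.ncard_diff_singleton_of_mem hbmem, hdeg p]
    omega
  · -- p ≠ a
    have hpa : p ≠ a := by
      intro h
      rw [h, SimpleGraph.dist_self] at hdist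
      omega
    have hset : {w | G.Adj p w ∧ Side G a b w ∧ G.dist a w = k + 1}
        = {w | G.Adj p w ∧ G.dist a w = G.dist a p + 1} := by
      ext w
      simp only [Set.mem_setOf_eq, hdist]
      constructor
      · rintro ⟨h1, _, h3⟩
        exact ⟨h1, h3⟩
      · rintro ⟨h1, h2⟩
        exact ⟨h1, children_side_auto hconn hacyc hab hside (by omega) h1, h2⟩
    rw [hset]
    exact children_ncard hconn hacyc hdeg (Ne.symm hpa)


lemma parent_lvl_singleton (hconn : G.Connected) (hacyc : G.IsAcyclic) {a b : V}
    (hab : G.Adj a b) {k : ℕ} {v : V} (hv : v ∈ lvl G a b (k + 1)) :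
    ∃ p, p ∈ lvl G a b k ∧ G.Adj v p ∧
      {w | G.Adj v w ∧ Side G a b w ∧ G.dist a w = k} = {p} := by
  obtain ⟨hside, hdist⟩ := hv
  obtain ⟨p, hpadj, hpd⟩ := exists_parent hconn (r := a) (v := v) (by omega)
  rw [hdist] at hpd
  have hps : Side G a b p := parent_side_auto hconn hacyc hab hside hpadj (by omega)
  refine ⟨p, ⟨hps, by omega⟩, hpadj, ?_⟩
  ext w
  simp only [Set.mem_setOf_eq, Set.mem_singleton_iff]
  constructor
  · rintro ⟨h1, h2, h3⟩
    exact parent_unique hconn hacyc (r := a) h1 (by omega) hpadj (by omega)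
  · rintro rfl
    exact ⟨hpadj, hps, by omega⟩

lemma lvl_card (hconn : G.Connected) (hacyc : G.IsAcyclic) {q : ℕ}
    (hdeg : ∀ v : V, (G.neighborSet v).ncard = q + 1) {a b : V} (hab : G.Adj a b) :
    ∀ k, (lvl G a b k).Finite ∧ (lvl G a b k).ncard = q ^ k := by
  haveI := Classical.decEq V
  intro k
  induction k with
  | zero =>
      rw [lvl_zero hconn a b]
      exact ⟨Set.finite_singleton a, by simp⟩
  | succ k ih =>
      obtain ⟨hfin, hcard⟩ := ih
      set Ch : V → Set V := fun p => {w | G.Adj p w ∧ Side G a b w ∧ G.dist a w = k + 1}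
        with hCh
      have hChfin : ∀ p, (Ch p).Finite :=
        fun p => (neighborSet_finite hdeg p).subset (fun w hw => hw.1)
      have hU : lvl G a b (k + 1) = ⋃ p ∈ lvl G a b k, Ch p := by
        ext v
        simp only [Set.mem_iUnion, exists_prop]
        constructor
        · intro hv
          obtain ⟨p, hp, hadj, -⟩ := parent_lvl_singleton hconn hacyc hab hv
          exact ⟨p, hp, hadj.symm, hv.1, hv.2⟩
        · rintro ⟨p, hp, h1, h2, h3⟩
          exact ⟨h2, h3⟩
      set L : Finset V := hfin.toFinset with hL
      set F : V → Finset V := fun p => (hChfin p).toFinset with hF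
      have hU2 : lvl G a b (k + 1) = ↑(L.biUnion F) := by
        rw [hU]
        ext v
        simp only [Finset.coe_biUnion, Set.mem_iUnion, Finset.mem_coe, hF,
          Set.Finite.mem_toFinset, hL, exists_prop]
      have hdisj : ∀ p₁ ∈ L, ∀ p₂ ∈ L, p₁ ≠ p₂ → Disjoint (F p₁) (F p₂) := by
        intro p₁ hp1 p₂ hp2 hne
        rw [Finset.disjoint_left]
        intro w hw1 hw2
        rw [hF] at hw1 hw2
        simp only [Set.Finite.mem_toFinset, hCh, Set.mem_setOf_eq] at hw1 hw2
        rw [hL, Set.Finite.mem_toFinset] at hp1 hp2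
        exact hne (parent_unique hconn hacyc (r := a) hw1.1.symm
          (by rw [hp1.2, hw1.2.2]) hw2.1.symm (by rw [hp2.2, hw2.2.2]))
      have hcardF : ∀ p ∈ L, (F p).card = q := by
        intro p hp
        rw [hL, Set.Finite.mem_toFinset] at hp
        have := children_lvl_ncard hconn hacyc hdeg hab hp
        rwa [Set.ncard_eq_toFinset_card _ (hChfin p)] at this
      constructor
      · rw [hU2]; exact (L.biUnion F).finite_toSet
      · rw [hU2, Set.ncard_coe_finset, Finset.card_biUnion hdisj,
          Finset.sum_congr rfl hcardF, Finset.sum_const, smul_eq_mul]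
        rw [hL, ← Set.ncard_eq_toFinset_card _ hfin, hcard]
        ring


open Classical in
noncomputable def pot (G : SimpleGraph V) (X Y : V) : V → ℝ := fun v =>
  if Side G X Y v then (G.dist X v : ℝ) else -(G.dist Y v : ℝ) - 1

lemma pot_pos {X Y v : V} (hv : Side G X Y v) : pot G X Y v = (G.dist X v : ℝ) := by
  rw [pot, if_pos hv]

lemma pot_neg {X Y v : V} (hv : ¬ Side G X Y v) : pot G X Y v = -(G.dist Y v : ℝ) - 1 := by
  rw [pot, if_neg hv]

lemma pot_lipschitz (hconn : G.Connected) (hacyc : G.IsAcyclic) {X Y : V}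
    (hXY : G.Adj X Y) (v w : V) :
    pot G X Y v - pot G X Y w ≤ (G.dist v w : ℝ) := by
  classical
  by_cases hv : Side G X Y v <;> by_cases hw : Side G X Y w
  · -- both X-side
    rw [pot_pos hv, pot_pos hw]
    have h1 : G.dist X v ≤ G.dist X w + G.dist w v := hconn.dist_triangle
    have h2 : G.dist w v = G.dist v w := dcomm G w v
    have := h1.trans_eq (by rw [h2])
    push_cast
    have := (Nat.cast_le (α := ℝ)).mpr this
    push_cast at this
    linarith
  · -- v X-side, w Y-side
    rw [pot_pos hv, pot_neg hw]
    have hw' : Side G Y X w := (side_total hconn Y X w).resolve_right hw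
    have := dist_cross hconn hacyc hXY hv hw'
    rw [dcomm G v X] at this
    rw [this]
    push_cast
    linarith
  · -- v Y-side, w X-side
    rw [pot_neg hv, pot_pos hw]
    have : (0:ℝ) ≤ (G.dist v w : ℝ) := by positivity
    have h2 : (0:ℝ) ≤ (G.dist Y v : ℝ) := by positivity
    have h3 : (0:ℝ) ≤ (G.dist X w : ℝ) := by positivity
    linarith
  · -- both Y-side
    rw [pot_neg hv, pot_neg hw]
    have h1 : G.dist Y w ≤ G.dist Y v + G.dist v w := hconn.dist_triangle
    have := (Nat.cast_le (α := ℝ)).mpr h1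
    push_cast at this
    linarith


lemma cost_ge_potential {μ ν : V → ℝ} {f : V → ℝ}
    (hf : ∀ v w, f v - f w ≤ (G.dist v w : ℝ)) {c : ℝ}
    (hc : c ∈ transportCosts G μ ν) :
    (∑ᶠ v, f v * μ v) - (∑ᶠ v, f v * ν v) ≤ c := by
  classical
  obtain ⟨π, hpos, hfin, hrow, hcol, hsum⟩ := hc
  set T : Finset (V × V) := hfin.toFinset with hT
  set s : Finset V := T.image Prod.fst with hs
  set t : Finset V := T.image Prod.snd with ht
  have hmemT : ∀ v w, π v w ≠ 0 → (v, w) ∈ T := by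
    intro v w h
    rw [hT, Set.Finite.mem_toFinset]
    exact h
  have hmems : ∀ v w, π v w ≠ 0 → v ∈ s := by
    intro v w h
    exact Finset.mem_image.mpr ⟨(v, w), hmemT v w h, rfl⟩
  have hmemt : ∀ v w, π v w ≠ 0 → w ∈ t := by
    intro v w h
    exact Finset.mem_image.mpr ⟨(v, w), hmemT v w h, rfl⟩
  have hrow' : ∀ v, ∑ w ∈ t, π v w = μ v := by
    intro v
    rw [← hrow v]
    exact (finsum_eq_sum_of_support_subset _ (fun w hw => hmemt v w hw)).symm
  have hcol' : ∀ w, ∑ v ∈ s, π v w = ν w := by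
    intro w
    rw [← hcol w]
    exact (finsum_eq_sum_of_support_subset _ (fun v hv => hmems v w hv)).symm
  have step1 : c = ∑ p ∈ s ×ˢ t, (G.dist p.1 p.2 : ℝ) * π p.1 p.2 := by
    rw [← hsum]
    refine finsum_eq_sum_of_support_subset _ ?_
    intro p hp
    have hπ : π p.1 p.2 ≠ 0 := by
      intro h0
      apply hp
      simp [Function.mem_support, h0]
    exact Finset.mem_product.mpr ⟨hmems _ _ hπ, hmemt _ _ hπ⟩
  have step2 : ∑ p ∈ s ×ˢ t, (f p.1 - f p.2) * π p.1 p.2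
      ≤ ∑ p ∈ s ×ˢ t, (G.dist p.1 p.2 : ℝ) * π p.1 p.2 := by
    refine Finset.sum_le_sum fun p _ => ?_
    exact mul_le_mul_of_nonneg_right (hf p.1 p.2) (hpos p.1 p.2)
  have hμs : ∑ᶠ v, f v * μ v = ∑ v ∈ s, f v * μ v := by
    refine finsum_eq_sum_of_support_subset _ ?_
    intro v hv
    have hμ : μ v ≠ 0 := by
      intro h0
      apply hv
      simp [Function.mem_support, h0]
    by_contra hvs
    apply hμ
    rw [← hrow v]
    refine finsum_eq_zero_of_forall_eq_zero fun w => ?_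
    by_contra hw
    exact hvs (hmems v w hw)
  have hνt : ∑ᶠ v, f v * ν v = ∑ w ∈ t, f w * ν w := by
    refine finsum_eq_sum_of_support_subset _ ?_
    intro w hw
    have hν : ν w ≠ 0 := by
      intro h0
      apply hw
      simp [Function.mem_support, h0]
    by_contra hwt
    apply hν
    rw [← hcol w]
    refine finsum_eq_zero_of_forall_eq_zero fun v => ?_
    by_contra hv
    exact hwt (hmemt v w hv)
  have step3 : ∑ p ∈ s ×ˢ t, (f p.1 - f p.2) * π p.1 p.2
      = (∑ᶠ v, f v * μ v) - (∑ᶠ v, f v * ν v) := by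
    have e1 : ∑ p ∈ s ×ˢ t, (f p.1 - f p.2) * π p.1 p.2
        = (∑ p ∈ s ×ˢ t, f p.1 * π p.1 p.2) - ∑ p ∈ s ×ˢ t, f p.2 * π p.1 p.2 := by
      rw [← Finset.sum_sub_distrib]
      exact Finset.sum_congr rfl fun p _ => by ring
    have e2 : ∑ p ∈ s ×ˢ t, f p.1 * π p.1 p.2 = ∑ v ∈ s, f v * μ v := by
      rw [Finset.sum_product]
      refine Finset.sum_congr rfl fun v _ => ?_
      rw [show (∑ y ∈ t, f (v, y).1 * π (v, y).1 (v, y).2) = ∑ y ∈ t, f v * π v y from rfl,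
        ← Finset.mul_sum, hrow' v]
    have e3 : ∑ p ∈ s ×ˢ t, f p.2 * π p.1 p.2 = ∑ w ∈ t, f w * ν w := by
      rw [Finset.sum_product, Finset.sum_comm]
      refine Finset.sum_congr rfl fun w _ => ?_
      rw [show (∑ x ∈ s, f (x, w).2 * π (x, w).1 (x, w).2) = ∑ x ∈ s, f w * π x w from rfl,
        ← Finset.mul_sum, hcol' w]
    rw [e1, e2, e3, hμs, hνt]
  rw [step1]
  rw [← step3]
  exact step2


section Main

variable {q : ℕ} {X Y : V}

lemma sphereX_decomp (hconn : G.Connected) (hacyc : G.IsAcyclic) (hXY : G.Adj X Y)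
    {n : ℕ} (hn : 1 ≤ n) (v : V) :
    G.dist X v = n ↔ (v ∈ lvl G X Y n ∨ v ∈ lvl G Y X (n - 1)) := by
  constructor
  · intro h
    rcases side_total hconn X Y v with hs | hs
    · exact Or.inl ⟨hs, h⟩
    · refine Or.inr ⟨hs, ?_⟩
      have := dist_of_otherside hconn hacyc hXY hs
      omega
  · rintro (⟨hs, h⟩ | ⟨hs, h⟩)
    · exact h
    · have := dist_of_otherside hconn hacyc hXY hs
      omega

lemma sphereY_decomp (hconn : G.Connected) (hacyc : G.IsAcyclic) (hXY : G.Adj X Y)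
    {n : ℕ} (hn : 1 ≤ n) (v : V) :
    G.dist Y v = n ↔ (v ∈ lvl G X Y (n - 1) ∨ v ∈ lvl G Y X n) := by
  constructor
  · intro h
    rcases side_total hconn X Y v with hs | hs
    · refine Or.inl ⟨hs, ?_⟩
      have := dist_of_otherside hconn hacyc hXY.symm hs
      omega
    · exact Or.inr ⟨hs, h⟩
  · rintro (⟨hs, h⟩ | ⟨hs, h⟩)
    · have := dist_of_otherside hconn hacyc hXY.symm hs
      omega
    · exact h

lemma lvl_disj (hacyc : G.IsAcyclic) {X Y : V} (hXY : G.Adj X Y) (j k : ℕ) (v : V) :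
    v ∈ lvl G X Y j → v ∈ lvl G Y X k → False := by
  rintro ⟨h1, -⟩ ⟨h2, -⟩
  exact side_not_both hacyc hXY ⟨h1, h2⟩

lemma sphereMeasure_eq_zero {u v : V} {n : ℕ} (h : G.dist u v ≠ n) :
    sphereMeasure G q n u v = 0 := by
  rw [sphereMeasure, if_neg h]

lemma sphereMeasure_eq {u v : V} {n : ℕ} (h : G.dist u v = n) :
    sphereMeasure G q n u v = if n = 0 then 1 else (((q : ℝ) + 1) * (q : ℝ) ^ (n - 1))⁻¹ := by
  rw [sphereMeasure, if_pos h]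

lemma finsum_pot (hconn : G.Connected) (hacyc : G.IsAcyclic)
    (hdeg : ∀ v : V, (G.neighborSet v).ncard = q + 1) (hXY : G.Adj X Y)
    (hq : 2 ≤ q) (n : ℕ) :
    (∑ᶠ v, pot G X Y v * sphereMeasure G q n X v)
      - (∑ᶠ v, pot G X Y v * sphereMeasure G q n Y v)
    = 2 * (((q : ℝ) - 1) / ((q : ℝ) + 1)) * n + 1 := by
  classical
  have hnotY : ¬ Side G X Y Y := fun h => side_not_both hacyc hXY ⟨h, side_refl Y X⟩
  rcases Nat.eq_zero_or_pos n with rfl | hn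
  · have h1 : ∑ᶠ v, pot G X Y v * sphereMeasure G q 0 X v = 0 := by
      have : ∑ᶠ v, pot G X Y v * sphereMeasure G q 0 X v
          = ∑ v ∈ ({X} : Finset V), pot G X Y v * sphereMeasure G q 0 X v := by
        refine finsum_eq_sum_of_support_subset _ ?_
        intro v hv
        have : G.dist X v = 0 := by
          by_contra h
          exact hv (by simp [sphereMeasure_eq_zero (G := G) (q := q) h])
        simp [Finset.mem_coe, Finset.mem_singleton, (hconn.dist_eq_zero_iff.mp this).symm]
      rw [this, Finset.sum_singleton, pot_pos (side_refl X Y)]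
      simp
    have h2 : ∑ᶠ v, pot G X Y v * sphereMeasure G q 0 Y v = -1 := by
      have : ∑ᶠ v, pot G X Y v * sphereMeasure G q 0 Y v
          = ∑ v ∈ ({Y} : Finset V), pot G X Y v * sphereMeasure G q 0 Y v := by
        refine finsum_eq_sum_of_support_subset _ ?_
        intro v hv
        have : G.dist Y v = 0 := by
          by_contra h
          exact hv (by simp [sphereMeasure_eq_zero (G := G) (q := q) h])
        simp [Finset.mem_coe, Finset.mem_singleton, (hconn.dist_eq_zero_iff.mp this).symm]
      rw [this, Finset.sum_singleton, pot_neg hnotY]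
      have : sphereMeasure G q 0 Y Y = 1 := by
        rw [sphereMeasure_eq (by simp)]
        simp
      rw [this]
      simp
    rw [h1, h2]
    norm_num
  · obtain ⟨m, rfl⟩ : ∃ m, n = m + 1 := ⟨n - 1, by omega⟩
    have hm1 : m + 1 - 1 = m := by omega
    set a : ℝ := (((q : ℝ) + 1) * (q : ℝ) ^ m)⁻¹ with ha
    have hq0 : (0:ℝ) < (q:ℝ) := by positivity
    have hq1 : (0:ℝ) < (q:ℝ) + 1 := by positivity
    have hqm : (0:ℝ) < (q:ℝ) ^ m := by positivity
    obtain ⟨hAfin, hAcard⟩ := lvl_card hconn hacyc hdeg hXY (m + 1)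
    obtain ⟨hBfin, hBcard⟩ := lvl_card hconn hacyc hdeg hXY.symm m
    obtain ⟨hCfin, hCcard⟩ := lvl_card hconn hacyc hdeg hXY m
    obtain ⟨hDfin, hDcard⟩ := lvl_card hconn hacyc hdeg hXY.symm (m + 1)
    set AF := hAfin.toFinset with hAF
    set BF := hBfin.toFinset with hBF
    set CF := hCfin.toFinset with hCF
    set DF := hDfin.toFinset with hDF
    have hmemA : ∀ v, v ∈ AF ↔ v ∈ lvl G X Y (m+1) := fun v => Set.Finite.mem_toFinset _
    have hmemB : ∀ v, v ∈ BF ↔ v ∈ lvl G Y X m := fun v => Set.Finite.mem_toFinset _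
    have hmemC : ∀ v, v ∈ CF ↔ v ∈ lvl G X Y m := fun v => Set.Finite.mem_toFinset _
    have hmemD : ∀ v, v ∈ DF ↔ v ∈ lvl G Y X (m+1) := fun v => Set.Finite.mem_toFinset _
    -- values of the measures
    have hμA : ∀ v ∈ AF, sphereMeasure G q (m+1) X v = a := by
      intro v hv
      rw [sphereMeasure_eq ((hmemA v).mp hv).2, if_neg (Nat.succ_ne_zero m), hm1]
    have hμB : ∀ v ∈ BF, sphereMeasure G q (m+1) X v = a := by
      intro v hv
      obtain ⟨hs, hd⟩ := (hmemB v).mp hv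
      have := dist_of_otherside hconn hacyc hXY hs
      rw [sphereMeasure_eq (by omega), if_neg (Nat.succ_ne_zero m), hm1]
    have hνC : ∀ v ∈ CF, sphereMeasure G q (m+1) Y v = a := by
      intro v hv
      obtain ⟨hs, hd⟩ := (hmemC v).mp hv
      have := dist_of_otherside hconn hacyc hXY.symm hs
      rw [sphereMeasure_eq (by omega), if_neg (Nat.succ_ne_zero m), hm1]
    have hνD : ∀ v ∈ DF, sphereMeasure G q (m+1) Y v = a := by
      intro v hv
      rw [sphereMeasure_eq ((hmemD v).mp hv).2, if_neg (Nat.succ_ne_zero m), hm1]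
    -- values of the potential
    have hpotA : ∀ v ∈ AF, pot G X Y v = ((m:ℝ) + 1) := by
      intro v hv
      obtain ⟨hs, hd⟩ := (hmemA v).mp hv
      rw [pot_pos hs, hd]
      push_cast
      ring
    have hpotB : ∀ v ∈ BF, pot G X Y v = -((m:ℝ) + 1) := by
      intro v hv
      obtain ⟨hs, hd⟩ := (hmemB v).mp hv
      have hns : ¬ Side G X Y v := fun h => side_not_both hacyc hXY ⟨h, hs⟩
      rw [pot_neg hns, hd]
      push_cast
      ring
    have hpotC : ∀ v ∈ CF, pot G X Y v = (m:ℝ) := by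
      intro v hv
      obtain ⟨hs, hd⟩ := (hmemC v).mp hv
      rw [pot_pos hs, hd]
    have hpotD : ∀ v ∈ DF, pot G X Y v = -((m:ℝ) + 2) := by
      intro v hv
      obtain ⟨hs, hd⟩ := (hmemD v).mp hv
      have hns : ¬ Side G X Y v := fun h => side_not_both hacyc hXY ⟨h, hs⟩
      rw [pot_neg hns, hd]
      push_cast
      ring
    have hdisjAB : Disjoint AF BF := by
      rw [Finset.disjoint_left]
      intro v h1 h2
      exact lvl_disj hacyc hXY _ _ v ((hmemA v).mp h1) ((hmemB v).mp h2)
    have hdisjCD : Disjoint CF DF := by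
      rw [Finset.disjoint_left]
      intro v h1 h2
      exact lvl_disj hacyc hXY _ _ v ((hmemC v).mp h1) ((hmemD v).mp h2)
    have hXsum : ∑ᶠ v, pot G X Y v * sphereMeasure G q (m+1) X v
        = ((q:ℝ) ^ (m+1) * ((m:ℝ)+1) - (q:ℝ) ^ m * ((m:ℝ)+1)) * a := by
      have hss : ∑ᶠ v, pot G X Y v * sphereMeasure G q (m+1) X v
          = ∑ v ∈ AF ∪ BF, pot G X Y v * sphereMeasure G q (m+1) X v := by
        refine finsum_eq_sum_of_support_subset _ ?_
        intro v hv
        have hd : G.dist X v = m + 1 := by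
          by_contra h
          exact hv (by simp [sphereMeasure_eq_zero (G := G) (q := q) h])
        rcases (sphereX_decomp hconn hacyc hXY (by omega) v).mp hd with h | h
        · simp only [Finset.coe_union, Set.mem_union, Finset.mem_coe]
          exact Or.inl ((hmemA v).mpr h)
        · simp only [Finset.coe_union, Set.mem_union, Finset.mem_coe]
          rw [hm1] at h
          exact Or.inr ((hmemB v).mpr h)
      rw [hss, Finset.sum_union hdisjAB]
      have e1 : ∑ v ∈ AF, pot G X Y v * sphereMeasure G q (m+1) X v
          = ∑ v ∈ AF, ((m:ℝ)+1) * a :=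
        Finset.sum_congr rfl fun v hv => by rw [hpotA v hv, hμA v hv]
      have e2 : ∑ v ∈ BF, pot G X Y v * sphereMeasure G q (m+1) X v
          = ∑ v ∈ BF, -((m:ℝ)+1) * a :=
        Finset.sum_congr rfl fun v hv => by rw [hpotB v hv, hμB v hv]
      rw [e1, e2, Finset.sum_const, Finset.sum_const]
      have hcA : AF.card = q ^ (m+1) := by
        rw [hAF, ← Set.ncard_eq_toFinset_card _ hAfin, hAcard]
      have hcB : BF.card = q ^ m := by
        rw [hBF, ← Set.ncard_eq_toFinset_card _ hBfin, hBcard]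
      rw [hcA, hcB]
      push_cast
      ring
    have hYsum : ∑ᶠ v, pot G X Y v * sphereMeasure G q (m+1) Y v
        = ((q:ℝ) ^ m * (m:ℝ) - (q:ℝ) ^ (m+1) * ((m:ℝ)+2)) * a := by
      have hss : ∑ᶠ v, pot G X Y v * sphereMeasure G q (m+1) Y v
          = ∑ v ∈ CF ∪ DF, pot G X Y v * sphereMeasure G q (m+1) Y v := by
        refine finsum_eq_sum_of_support_subset _ ?_
        intro v hv
        have hd : G.dist Y v = m + 1 := by
          by_contra h
          exact hv (by simp [sphereMeasure_eq_zero (G := G) (q := q) h])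
        rcases (sphereY_decomp hconn hacyc hXY (by omega) v).mp hd with h | h
        · simp only [Finset.coe_union, Set.mem_union, Finset.mem_coe]
          rw [hm1] at h
          exact Or.inl ((hmemC v).mpr h)
        · simp only [Finset.coe_union, Set.mem_union, Finset.mem_coe]
          exact Or.inr ((hmemD v).mpr h)
      rw [hss, Finset.sum_union hdisjCD]
      have e1 : ∑ v ∈ CF, pot G X Y v * sphereMeasure G q (m+1) Y v
          = ∑ v ∈ CF, (m:ℝ) * a :=
        Finset.sum_congr rfl fun v hv => by rw [hpotC v hv, hνC v hv]
      have e2 : ∑ v ∈ DF, pot G X Y v * sphereMeasure G q (m+1) Y v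
          = ∑ v ∈ DF, -((m:ℝ)+2) * a :=
        Finset.sum_congr rfl fun v hv => by rw [hpotD v hv, hνD v hv]
      rw [e1, e2, Finset.sum_const, Finset.sum_const]
      have hcC : CF.card = q ^ m := by
        rw [hCF, ← Set.ncard_eq_toFinset_card _ hCfin, hCcard]
      have hcD : DF.card = q ^ (m+1) := by
        rw [hDF, ← Set.ncard_eq_toFinset_card _ hDfin, hDcard]
      rw [hcC, hcD]
      push_cast
      ring
    rw [hXsum, hYsum, ha]
    have hne1 : ((q:ℝ) + 1) ≠ 0 := by positivity
    have hne2 : ((q:ℝ)) ^ m ≠ 0 := by positivity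
    field_simp
    push_cast
    ring


lemma sum_ite_card {S : Finset V} {P : V → Prop} [DecidablePred P] (c : ℝ) :
    ∑ w ∈ S, (if P w then c else 0) = ((S.filter P).card : ℝ) * c := by
  rw [← Finset.sum_filter, Finset.sum_const, nsmul_eq_mul]

lemma filter_parent_card (hconn : G.Connected) (hacyc : G.IsAcyclic) (hXY : G.Adj X Y)
    {m : ℕ} {CFin : Set.Finite (lvl G X Y m)} {v : V} (hv : v ∈ lvl G X Y (m + 1)) :
    haveI := Classical.decEq V
    haveI := fun w => Classical.propDecidable (G.Adj v w)
    ((CFin.toFinset.filter (fun w => G.Adj v w)).card = 1 ∧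
      ∀ w ∈ CFin.toFinset, G.Adj v w → G.dist v w = 1) := by
  classical
  obtain ⟨p, hpC, hpadj, hset⟩ := parent_lvl_singleton hconn hacyc hXY hv
  constructor
  · have : CFin.toFinset.filter (fun w => G.Adj v w) = {p} := by
      ext w
      simp only [Finset.mem_filter, Set.Finite.mem_toFinset, Finset.mem_singleton]
      constructor
      · rintro ⟨⟨h1, h2⟩, h3⟩
        have : w ∈ {w | G.Adj v w ∧ Side G X Y w ∧ G.dist X w = m} := ⟨h3, h1, h2⟩
        rwa [hset] at this
      · intro h
        have hp : p ∈ {w | G.Adj v w ∧ Side G X Y w ∧ G.dist X w = m} := by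
          rw [hset]; rfl
        rw [h]
        exact ⟨⟨hp.2.1, hp.2.2⟩, hp.1⟩
    rw [this, Finset.card_singleton]
  · intro w _ hadj
    exact dist_eq_one_iff_adj.mpr hadj

lemma filter_children_card (hconn : G.Connected) (hacyc : G.IsAcyclic)
    (hdeg : ∀ v : V, (G.neighborSet v).ncard = q + 1) (hXY : G.Adj X Y)
    {m : ℕ} {AFin : Set.Finite (lvl G X Y (m + 1))} {w : V} (hw : w ∈ lvl G X Y m) :
    haveI := Classical.decEq V
    haveI := fun v => Classical.propDecidable (G.Adj v w)
    (AFin.toFinset.filter (fun v => G.Adj v w)).card = q := by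
  classical
  have hn := children_lvl_ncard hconn hacyc hdeg hXY hw
  have hseteq : (↑(AFin.toFinset.filter (fun v => G.Adj v w)) : Set V)
      = {v | G.Adj w v ∧ Side G X Y v ∧ G.dist X v = m + 1} := by
    ext v
    simp only [Finset.coe_filter, Set.Finite.mem_toFinset, Set.mem_setOf_eq]
    constructor
    · rintro ⟨⟨h1, h2⟩, h3⟩
      exact ⟨h3.symm, h1, h2⟩
    · rintro ⟨h1, h2, h3⟩
      exact ⟨⟨h2, h3⟩, h1.symm⟩
  rw [← Set.ncard_coe_finset, hseteq, hn]


lemma plan_mem (hconn : G.Connected) (hacyc : G.IsAcyclic)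
    (hdeg : ∀ v : V, (G.neighborSet v).ncard = q + 1) (hXY : G.Adj X Y)
    (hq : 2 ≤ q) (n : ℕ) :
    (2 * (((q : ℝ) - 1) / ((q : ℝ) + 1)) * n + 1)
      ∈ transportCosts G (sphereMeasure G q n X) (sphereMeasure G q n Y) := by
  classical
  rcases Nat.eq_zero_or_pos n with rfl | hn
  · -- n = 0 : move the point mass at X to Y
    refine ⟨fun v w => if v = X ∧ w = Y then 1 else 0, ?_, ?_, ?_, ?_, ?_⟩
    · intro v w; dsimp only; split_ifs <;> norm_num
    · refine Set.Finite.subset (Set.finite_singleton (X, Y)) ?_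
      intro p hp
      simp only [Function.mem_support] at hp
      simp only [Set.mem_singleton_iff]
      by_contra h
      apply hp
      rw [if_neg]
      rintro ⟨h1, h2⟩
      exact h (Prod.ext h1 h2)
    · intro v
      by_cases hv : v = X
      · subst hv
        have h1 : ∑ᶠ w, (if v = v ∧ w = Y then (1:ℝ) else 0)
            = ∑ w ∈ ({Y} : Finset V), (if v = v ∧ w = Y then (1:ℝ) else 0) := by
          refine finsum_eq_sum_of_support_subset _ ?_
          intro w hw
          simp only [Function.mem_support] at hw
          simp only [Finset.coe_singleton, Set.mem_singleton_iff]
          by_contra h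
          exact hw (if_neg (fun hc => h hc.2))
        rw [h1, Finset.sum_singleton, if_pos ⟨rfl, rfl⟩,
          sphereMeasure_eq (G := G) (q := q) (by simp), if_pos rfl]
      · have h1 : ∑ᶠ w, (if v = X ∧ w = Y then (1:ℝ) else 0) = 0 :=
          finsum_eq_zero_of_forall_eq_zero fun w => if_neg (fun hc => hv hc.1)
        rw [h1, sphereMeasure_eq_zero]
        intro h0
        exact hv (hconn.dist_eq_zero_iff.mp h0).symm
    · intro w
      by_cases hw : w = Y
      · have h1 : ∑ᶠ v, (if v = X ∧ w = Y then (1:ℝ) else 0)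
            = ∑ v ∈ ({X} : Finset V), (if v = X ∧ w = Y then (1:ℝ) else 0) := by
          refine finsum_eq_sum_of_support_subset _ ?_
          intro v hv
          simp only [Function.mem_support] at hv
          simp only [Finset.coe_singleton, Set.mem_singleton_iff]
          by_contra h
          exact hv (if_neg (fun hc => h hc.1))
        rw [h1, Finset.sum_singleton, if_pos ⟨rfl, hw⟩]
        have hd : G.dist Y w = 0 := by rw [hw]; simp
        rw [sphereMeasure_eq (G := G) (q := q) hd, if_pos rfl]
      · have h1 : ∑ᶠ v, (if v = X ∧ w = Y then (1:ℝ) else 0) = 0 :=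
          finsum_eq_zero_of_forall_eq_zero fun v => if_neg (fun hc => hw hc.2)
        rw [h1, sphereMeasure_eq_zero]
        intro h0
        exact hw (hconn.dist_eq_zero_iff.mp h0).symm
    · have h1 : (∑ᶠ p : V × V, (G.dist p.1 p.2 : ℝ) *
          (if p.1 = X ∧ p.2 = Y then (1:ℝ) else 0))
          = ∑ p ∈ ({(X,Y)} : Finset (V × V)), (G.dist p.1 p.2 : ℝ) *
          (if p.1 = X ∧ p.2 = Y then (1:ℝ) else 0) := by
        refine finsum_eq_sum_of_support_subset _ ?_
        intro p hp
        simp only [Function.mem_support] at hp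
        simp only [Finset.coe_singleton, Set.mem_singleton_iff]
        by_contra h
        apply hp
        rw [if_neg, mul_zero]
        rintro ⟨h1, h2⟩
        exact h (Prod.ext h1 h2)
      rw [show (∑ᶠ p : V × V, (G.dist p.1 p.2 : ℝ) *
          (fun v w => if v = X ∧ w = Y then (1:ℝ) else 0) p.1 p.2)
          = ∑ᶠ p : V × V, (G.dist p.1 p.2 : ℝ) *
          (if p.1 = X ∧ p.2 = Y then (1:ℝ) else 0) from rfl,
        h1, Finset.sum_singleton, if_pos ⟨rfl, rfl⟩, dist_eq_one_iff_adj.mpr hXY]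
      norm_num
  · -- n = m + 1
    obtain ⟨m, rfl⟩ : ∃ m, n = m + 1 := ⟨n - 1, by omega⟩
    have hm1 : m + 1 - 1 = m := by omega
    set a : ℝ := (((q : ℝ) + 1) * (q : ℝ) ^ m)⁻¹ with ha
    have hq0 : (0:ℝ) < (q:ℝ) := by positivity
    have hq0' : ((q:ℝ)) ≠ 0 := ne_of_gt hq0
    have hq1 : ((q:ℝ) + 1) ≠ 0 := by positivity
    have hqm : ((q:ℝ) ^ m) ≠ 0 := by positivity
    have hqm1 : ((q:ℝ) ^ (m+1)) ≠ 0 := by positivity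
    have hqs : (q:ℝ) * (q:ℝ) ^ m + (q:ℝ) ^ m ≠ 0 := by positivity
    have hq2 : (1:ℝ) ≤ (q:ℝ) := by
      have : (1:ℕ) ≤ q := by omega
      exact_mod_cast this
    have ha0 : 0 < a := by rw [ha]; positivity
    set cr : ℝ := a * ((q:ℝ) - 1) / ((q:ℝ) ^ (m+1) * (q:ℝ)) with hcr
    have hcr0 : 0 ≤ cr := by
      rw [hcr]
      have h1 : (0:ℝ) ≤ (q:ℝ) - 1 := by linarith
      positivity
    obtain ⟨hAfin, hAcard⟩ := lvl_card hconn hacyc hdeg hXY (m + 1)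
    obtain ⟨hBfin, hBcard⟩ := lvl_card hconn hacyc hdeg hXY.symm m
    obtain ⟨hCfin, hCcard⟩ := lvl_card hconn hacyc hdeg hXY m
    obtain ⟨hDfin, hDcard⟩ := lvl_card hconn hacyc hdeg hXY.symm (m + 1)
    set AF := hAfin.toFinset with hAF
    set BF := hBfin.toFinset with hBF
    set CF := hCfin.toFinset with hCF
    set DF := hDfin.toFinset with hDF
    have hmemA : ∀ v, v ∈ AF ↔ v ∈ lvl G X Y (m+1) := fun v => Set.Finite.mem_toFinset _
    have hmemB : ∀ v, v ∈ BF ↔ v ∈ lvl G Y X m := fun v => Set.Finite.mem_toFinset _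
    have hmemC : ∀ v, v ∈ CF ↔ v ∈ lvl G X Y m := fun v => Set.Finite.mem_toFinset _
    have hmemD : ∀ v, v ∈ DF ↔ v ∈ lvl G Y X (m+1) := fun v => Set.Finite.mem_toFinset _
    have hcA : AF.card = q ^ (m+1) := by
      rw [hAF, ← Set.ncard_eq_toFinset_card _ hAfin, hAcard]
    have hcB : BF.card = q ^ m := by
      rw [hBF, ← Set.ncard_eq_toFinset_card _ hBfin, hBcard]
    have hcD : DF.card = q ^ (m+1) := by
      rw [hDF, ← Set.ncard_eq_toFinset_card _ hDfin, hDcard]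
    have hdisjAB : Disjoint AF BF := by
      rw [Finset.disjoint_left]
      intro v h1 h2
      exact lvl_disj hacyc hXY _ _ v ((hmemA v).mp h1) ((hmemB v).mp h2)
    have hdisjCD : Disjoint CF DF := by
      rw [Finset.disjoint_left]
      intro v h1 h2
      exact lvl_disj hacyc hXY _ _ v ((hmemC v).mp h1) ((hmemD v).mp h2)
    -- measure values
    have hμA : ∀ v ∈ AF, sphereMeasure G q (m+1) X v = a := by
      intro v hv
      rw [sphereMeasure_eq ((hmemA v).mp hv).2, if_neg (Nat.succ_ne_zero m), hm1]
    have hμB : ∀ v ∈ BF, sphereMeasure G q (m+1) X v = a := by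
      intro v hv
      obtain ⟨hs, hd⟩ := (hmemB v).mp hv
      have := dist_of_otherside hconn hacyc hXY hs
      rw [sphereMeasure_eq (by omega), if_neg (Nat.succ_ne_zero m), hm1]
    have hνC : ∀ v ∈ CF, sphereMeasure G q (m+1) Y v = a := by
      intro v hv
      obtain ⟨hs, hd⟩ := (hmemC v).mp hv
      have := dist_of_otherside hconn hacyc hXY.symm hs
      rw [sphereMeasure_eq (by omega), if_neg (Nat.succ_ne_zero m), hm1]
    have hνD : ∀ v ∈ DF, sphereMeasure G q (m+1) Y v = a := by
      intro v hv
      rw [sphereMeasure_eq ((hmemD v).mp hv).2, if_neg (Nat.succ_ne_zero m), hm1]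
    -- counting facts
    have hC1 : ∀ v ∈ AF, (CF.filter (fun w => G.Adj v w)).card = 1 := by
      intro v hv
      exact (filter_parent_card hconn hacyc hXY (CFin := hCfin) ((hmemA v).mp hv)).1
    have hA1 : ∀ w ∈ CF, (AF.filter (fun v => G.Adj v w)).card = q := by
      intro w hw
      exact filter_children_card hconn hacyc hdeg hXY (AFin := hAfin) ((hmemC w).mp hw)
    have hD1 : ∀ w ∈ DF, (BF.filter (fun v => G.Adj v w)).card = 1 := by
      intro w hw
      have h := (filter_parent_card hconn hacyc hXY.symm (CFin := hBfin)
        ((hmemD w).mp hw)).1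
      rw [show BF.filter (fun v => G.Adj v w) = BF.filter (fun v => G.Adj w v) from
        Finset.filter_congr (fun u _ => by rw [adj_comm])]
      exact h
    have hB1 : ∀ v ∈ BF, (DF.filter (fun w => G.Adj v w)).card = q := by
      intro v hv
      have h := filter_children_card hconn hacyc hdeg hXY.symm (AFin := hDfin)
        ((hmemB v).mp hv)
      rw [show DF.filter (fun w => G.Adj v w) = DF.filter (fun w => G.Adj w v) from
        Finset.filter_congr (fun u _ => by rw [adj_comm])]
      exact h
    -- cross distances
    have hdistAD : ∀ v ∈ AF, ∀ w ∈ DF, G.dist v w = 2 * m + 3 := by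
      intro v hv w hw
      obtain ⟨hsv, hdv⟩ := (hmemA v).mp hv
      obtain ⟨hsw, hdw⟩ := (hmemD w).mp hw
      have := dist_cross hconn hacyc hXY hsv hsw
      rw [dcomm G v X] at this
      omega
    -- the transport plan
    set π : V → V → ℝ := fun v w =>
      if v ∈ AF then (if w ∈ CF ∧ G.Adj v w then a / (q:ℝ) else if w ∈ DF then cr else 0)
      else if v ∈ BF then (if w ∈ DF ∧ G.Adj v w then a / (q:ℝ) else 0) else 0 with hπ
    have hπnn : ∀ v w, 0 ≤ π v w := by
      intro v w
      rw [hπ]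
      dsimp only
      have h1 : 0 ≤ a / (q:ℝ) := by positivity
      split_ifs <;> first | exact le_refl 0 | exact h1 | exact hcr0
    have hπsupp : ∀ v w, π v w ≠ 0 → (v ∈ AF ∪ BF) ∧ (w ∈ CF ∪ DF) := by
      intro v w h
      rw [hπ] at h
      dsimp only at h
      by_cases h1 : v ∈ AF
      · rw [if_pos h1] at h
        refine ⟨Finset.mem_union_left _ h1, ?_⟩
        by_cases h2 : w ∈ CF ∧ G.Adj v w
        · exact Finset.mem_union_left _ h2.1
        · rw [if_neg h2] at h
          by_cases h3 : w ∈ DF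
          · exact Finset.mem_union_right _ h3
          · rw [if_neg h3] at h
            exact absurd rfl h
      · rw [if_neg h1] at h
        by_cases h2 : v ∈ BF
        · rw [if_pos h2] at h
          by_cases h3 : w ∈ DF ∧ G.Adj v w
          · exact ⟨Finset.mem_union_right _ h2, Finset.mem_union_right _ h3.1⟩
          · rw [if_neg h3] at h
            exact absurd rfl h
        · rw [if_neg h2] at h
          exact absurd rfl h
    -- row sums
    have hrowA : ∀ v ∈ AF, ∑ᶠ w, π v w = a := by
      intro v hv
      have hsub : (Function.support (π v)) ⊆ ↑(CF ∪ DF) := fun w hw =>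
        Finset.mem_coe.mpr (hπsupp v w hw).2
      rw [finsum_eq_sum_of_support_subset _ hsub, Finset.sum_union hdisjCD]
      have e1 : ∑ w ∈ CF, π v w = ∑ w ∈ CF, (if G.Adj v w then a / (q:ℝ) else 0) := by
        refine Finset.sum_congr rfl fun w hw => ?_
        rw [hπ]
        dsimp only
        rw [if_pos hv]
        by_cases hadj : G.Adj v w
        · rw [if_pos ⟨hw, hadj⟩, if_pos hadj]
        · rw [if_neg (fun hc => hadj hc.2),
            if_neg (fun hd => Finset.disjoint_left.mp hdisjCD hw hd), if_neg hadj]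
      have e2 : ∑ w ∈ DF, π v w = ∑ w ∈ DF, cr := by
        refine Finset.sum_congr rfl fun w hw => ?_
        rw [hπ]
        dsimp only
        rw [if_pos hv, if_neg (fun hc => Finset.disjoint_left.mp hdisjCD hc.1 hw), if_pos hw]
      rw [e1, e2, sum_ite_card, hC1 v hv, Finset.sum_const, hcD, nsmul_eq_mul]
      rw [hcr]
      push_cast
      field_simp
      ring
    have hrowB : ∀ v ∈ BF, ∑ᶠ w, π v w = a := by
      intro v hv
      have hvA : v ∉ AF := fun h => Finset.disjoint_left.mp hdisjAB h hv
      have hsub : (Function.support (π v)) ⊆ ↑(CF ∪ DF) := fun w hw =>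
        Finset.mem_coe.mpr (hπsupp v w hw).2
      rw [finsum_eq_sum_of_support_subset _ hsub, Finset.sum_union hdisjCD]
      have e1 : ∑ w ∈ CF, π v w = 0 := by
        refine Finset.sum_eq_zero fun w hw => ?_
        rw [hπ]
        dsimp only
        rw [if_neg hvA, if_pos hv,
          if_neg (fun hc => Finset.disjoint_left.mp hdisjCD hw hc.1)]
      have e2 : ∑ w ∈ DF, π v w = ∑ w ∈ DF, (if G.Adj v w then a / (q:ℝ) else 0) := by
        refine Finset.sum_congr rfl fun w hw => ?_
        rw [hπ]
        dsimp only
        rw [if_neg hvA, if_pos hv]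
        by_cases hadj : G.Adj v w
        · rw [if_pos ⟨hw, hadj⟩, if_pos hadj]
        · rw [if_neg (fun hc => hadj hc.2), if_neg hadj]
      rw [e1, e2, sum_ite_card, hB1 v hv]
      push_cast
      field_simp
      ring
    -- column sums
    have hcolC : ∀ w ∈ CF, ∑ᶠ v, π v w = a := by
      intro w hw
      have hsub : (Function.support (fun v => π v w)) ⊆ ↑(AF ∪ BF) := fun v hv =>
        Finset.mem_coe.mpr (hπsupp v w hv).1
      rw [finsum_eq_sum_of_support_subset _ hsub, Finset.sum_union hdisjAB]
      have e1 : ∑ v ∈ AF, π v w = ∑ v ∈ AF, (if G.Adj v w then a / (q:ℝ) else 0) := by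
        refine Finset.sum_congr rfl fun v hv => ?_
        rw [hπ]
        dsimp only
        rw [if_pos hv]
        by_cases hadj : G.Adj v w
        · rw [if_pos ⟨hw, hadj⟩, if_pos hadj]
        · rw [if_neg (fun hc => hadj hc.2),
            if_neg (fun hd => Finset.disjoint_left.mp hdisjCD hw hd), if_neg hadj]
      have e2 : ∑ v ∈ BF, π v w = 0 := by
        refine Finset.sum_eq_zero fun v hv => ?_
        rw [hπ]
        dsimp only
        rw [if_neg (fun h => Finset.disjoint_left.mp hdisjAB h hv), if_pos hv,
          if_neg (fun hc => Finset.disjoint_left.mp hdisjCD hw hc.1)]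
      rw [e1, e2, sum_ite_card, hA1 w hw]
      push_cast
      field_simp
      ring
    have hcolD : ∀ w ∈ DF, ∑ᶠ v, π v w = a := by
      intro w hw
      have hwC : w ∉ CF := fun h => Finset.disjoint_left.mp hdisjCD h hw
      have hsub : (Function.support (fun v => π v w)) ⊆ ↑(AF ∪ BF) := fun v hv =>
        Finset.mem_coe.mpr (hπsupp v w hv).1
      rw [finsum_eq_sum_of_support_subset _ hsub, Finset.sum_union hdisjAB]
      have e1 : ∑ v ∈ AF, π v w = ∑ v ∈ AF, cr := by
        refine Finset.sum_congr rfl fun v hv => ?_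
        rw [hπ]
        dsimp only
        rw [if_pos hv, if_neg (fun hc => hwC hc.1), if_pos hw]
      have e2 : ∑ v ∈ BF, π v w = ∑ v ∈ BF, (if G.Adj v w then a / (q:ℝ) else 0) := by
        refine Finset.sum_congr rfl fun v hv => ?_
        rw [hπ]
        dsimp only
        rw [if_neg (fun h => Finset.disjoint_left.mp hdisjAB h hv), if_pos hv]
        by_cases hadj : G.Adj v w
        · rw [if_pos ⟨hw, hadj⟩, if_pos hadj]
        · rw [if_neg (fun hc => hadj hc.2), if_neg hadj]
      rw [e1, e2, Finset.sum_const, hcA, nsmul_eq_mul, sum_ite_card, hD1 w hw]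
      rw [hcr]
      push_cast
      field_simp
      ring
    refine ⟨π, hπnn, ?_, ?_, ?_, ?_⟩
    · refine Set.Finite.subset ((AF ∪ BF) ×ˢ (CF ∪ DF)).finite_toSet ?_
      intro p hp
      have h := hπsupp p.1 p.2 hp
      simp only [Finset.coe_product, Set.mem_prod, Finset.mem_coe]
      exact ⟨h.1, h.2⟩
    · intro v
      by_cases h1 : v ∈ AF
      · rw [hrowA v h1, hμA v h1]
      · by_cases h2 : v ∈ BF
        · rw [hrowB v h2, hμB v h2]
        · have hz : ∀ w, π v w = 0 := by
            intro w
            by_contra h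
            rcases Finset.mem_union.mp (hπsupp v w h).1 with h' | h'
            · exact h1 h'
            · exact h2 h'
          rw [finsum_eq_zero_of_forall_eq_zero hz, sphereMeasure_eq_zero]
          intro hd
          rcases (sphereX_decomp hconn hacyc hXY (by omega) v).mp hd with h | h
          · exact h1 ((hmemA v).mpr h)
          · rw [hm1] at h
            exact h2 ((hmemB v).mpr h)
    · intro w
      by_cases h1 : w ∈ CF
      · rw [hcolC w h1, hνC w h1]
      · by_cases h2 : w ∈ DF
        · rw [hcolD w h2, hνD w h2]
        · have hz : ∀ v, π v w = 0 := by
            intro v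
            by_contra h
            rcases Finset.mem_union.mp (hπsupp v w h).2 with h' | h'
            · exact h1 h'
            · exact h2 h'
          rw [finsum_eq_zero_of_forall_eq_zero hz, sphereMeasure_eq_zero]
          intro hd
          rcases (sphereY_decomp hconn hacyc hXY (by omega) w).mp hd with h | h
          · rw [hm1] at h
            exact h1 ((hmemC w).mpr h)
          · exact h2 ((hmemD w).mpr h)
    · -- the total cost
      have hsub : (Function.support fun p : V × V => (G.dist p.1 p.2 : ℝ) * π p.1 p.2)
          ⊆ ↑((AF ∪ BF) ×ˢ (CF ∪ DF)) := by
        intro p hp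
        have hπne : π p.1 p.2 ≠ 0 := by
          intro h
          apply hp
          simp only [Function.mem_support, h, mul_zero, ne_eq, not_true_eq_false,
            not_not]
        have h := hπsupp p.1 p.2 hπne
        simp only [Finset.coe_product, Set.mem_prod, Finset.mem_coe]
        exact ⟨h.1, h.2⟩
      rw [finsum_eq_sum_of_support_subset _ hsub, Finset.sum_product,
        Finset.sum_union hdisjAB]
      have eA : ∀ v ∈ AF, ∑ w ∈ CF ∪ DF, (G.dist v w : ℝ) * π v w
          = a / (q:ℝ) + ((q:ℝ))^(m+1) * ((2*(m:ℝ)+3) * cr) := by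
        intro v hv
        rw [Finset.sum_union hdisjCD]
        have e1 : ∑ w ∈ CF, (G.dist v w : ℝ) * π v w
            = ∑ w ∈ CF, (if G.Adj v w then a / (q:ℝ) else 0) := by
          refine Finset.sum_congr rfl fun w hw => ?_
          rw [hπ]
          dsimp only
          rw [if_pos hv]
          by_cases hadj : G.Adj v w
          · rw [if_pos ⟨hw, hadj⟩, if_pos hadj, dist_eq_one_iff_adj.mpr hadj]
            norm_num
          · rw [if_neg (fun hc => hadj hc.2),
              if_neg (fun hd => Finset.disjoint_left.mp hdisjCD hw hd), if_neg hadj,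
              mul_zero]
        have e2 : ∑ w ∈ DF, (G.dist v w : ℝ) * π v w
            = ∑ w ∈ DF, (2*(m:ℝ)+3) * cr := by
          refine Finset.sum_congr rfl fun w hw => ?_
          rw [hπ]
          dsimp only
          rw [if_pos hv, if_neg (fun hc => Finset.disjoint_left.mp hdisjCD hc.1 hw),
            if_pos hw, hdistAD v hv w hw]
          push_cast
          ring
        rw [e1, e2, sum_ite_card, hC1 v hv, Finset.sum_const, hcD, nsmul_eq_mul]
        push_cast
        ring
      have eB : ∀ v ∈ BF, ∑ w ∈ CF ∪ DF, (G.dist v w : ℝ) * π v w = a := by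
        intro v hv
        have hvA : v ∉ AF := fun h => Finset.disjoint_left.mp hdisjAB h hv
        rw [Finset.sum_union hdisjCD]
        have e1 : ∑ w ∈ CF, (G.dist v w : ℝ) * π v w = 0 := by
          refine Finset.sum_eq_zero fun w hw => ?_
          rw [hπ]
          dsimp only
          rw [if_neg hvA, if_pos hv,
            if_neg (fun hc => Finset.disjoint_left.mp hdisjCD hw hc.1), mul_zero]
        have e2 : ∑ w ∈ DF, (G.dist v w : ℝ) * π v w
            = ∑ w ∈ DF, (if G.Adj v w then a / (q:ℝ) else 0) := by
          refine Finset.sum_congr rfl fun w hw => ?_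
          rw [hπ]
          dsimp only
          rw [if_neg hvA, if_pos hv]
          by_cases hadj : G.Adj v w
          · rw [if_pos ⟨hw, hadj⟩, if_pos hadj, dist_eq_one_iff_adj.mpr hadj]
            norm_num
          · rw [if_neg (fun hc => hadj hc.2), if_neg hadj, mul_zero]
        rw [e1, e2, sum_ite_card, hB1 v hv]
        push_cast
        field_simp
        ring
      rw [Finset.sum_congr rfl eA, Finset.sum_congr rfl eB, Finset.sum_const,
        Finset.sum_const, hcA, hcB, nsmul_eq_mul, nsmul_eq_mul, hcr, ha]
      push_cast
      field_simp
      ring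

end Main

end W1aux

theorem stmt_15 {V : Type*} (G : SimpleGraph V) (q : ℕ) (hq : 2 ≤ q)
    (hconn : G.Connected) (hacyc : G.IsAcyclic)
    (hdeg : ∀ v : V, (G.neighborSet v).ncard = q + 1)
    (X Y : V) (hXY : G.Adj X Y) (n : ℕ) :
    IsLeast (transportCosts G (sphereMeasure G q n X) (sphereMeasure G q n Y))
      (2 * (((q : ℝ) - 1) / ((q : ℝ) + 1)) * n + 1) := by
  constructor
  · exact W1aux.plan_mem hconn hacyc hdeg hXY hq n
  · intro c hc
    have h1 := W1aux.cost_ge_potential (f := W1aux.pot G X Y)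
      (W1aux.pot_lipschitz hconn hacyc hXY) hc
    have h2 := W1aux.finsum_pot hconn hacyc hdeg hXY hq n
    rw [h2] at h1
    exact h1
end
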